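/- arXiv:1012.2993 — 3 statements merged into one kernel-verified Lean document; each statement's English description precedes it below -/
import Mathlib

section
/- Let (M, g) be an n-dimensional Riemannian manifold admitting a homothetic vector field h, i.e. ∇^i h^k + ∇^k h^i = 2 g^{ik} (so div(h) = n). Then for every l ∈ ℕ and every v ∈ C^{2l+1}(M), the function η = ⟨h, ∇v⟩ satisfies Δ_g^l η = 2l · Δ_g^l v + h^k ∇_k(Δ_g^l v). -/
open MeasureTheory
open scoped BigOperators

noncomputable section

/-- `i`-th partial derivative of a function on `ℝⁿ` (a coordinate chart). -/
def pd {n : ℕ} (i : Fin n) (f : (Fin n → ℝ) → ℝ) : (Fin n → ℝ) → ℝ :=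
  fun x => fderiv ℝ f x (Pi.single i 1)

/-- Christoffel symbols `Γ^k_{ij}` of the Levi-Civita connection of the metric `g`. -/
def christoffel {n : ℕ} (g ginv : (Fin n → ℝ) → Matrix (Fin n) (Fin n) ℝ)
    (k i j : Fin n) : (Fin n → ℝ) → ℝ :=
  fun x => (1 / 2) * ∑ l, ginv x k l *
    (pd i (fun y => g y l j) x + pd j (fun y => g y l i) x - pd l (fun y => g y i j) x)

/-- Covariant Hessian `∇_i ∇_j f` of a scalar function. -/
def hessg {n : ℕ} (g ginv : (Fin n → ℝ) → Matrix (Fin n) (Fin n) ℝ)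
    (f : (Fin n → ℝ) → ℝ) (i j : Fin n) : (Fin n → ℝ) → ℝ :=
  fun x => pd i (pd j f) x - ∑ k, christoffel g ginv k i j x * pd k f x

/-- Laplace–Beltrami operator of the metric `g`. -/
def lapB {n : ℕ} (g ginv : (Fin n → ℝ) → Matrix (Fin n) (Fin n) ℝ)
    (f : (Fin n → ℝ) → ℝ) : (Fin n → ℝ) → ℝ :=
  fun x => ∑ i, ∑ j, ginv x i j * hessg g ginv f i j x

/-- Covariant derivative `∇_i X^k` of a vector field. -/
def covDVec {n : ℕ} (g ginv : (Fin n → ℝ) → Matrix (Fin n) (Fin n) ℝ)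
    (X : (Fin n → ℝ) → Fin n → ℝ) (i k : Fin n) : (Fin n → ℝ) → ℝ :=
  fun x => pd i (fun y => X y k) x + ∑ m, christoffel g ginv k i m x * X x m

/-- `∇^i X^k`, the covariant derivative of a vector field with first index raised. -/
def covDVecUp {n : ℕ} (g ginv : (Fin n → ℝ) → Matrix (Fin n) (Fin n) ℝ)
    (X : (Fin n → ℝ) → Fin n → ℝ) (i k : Fin n) : (Fin n → ℝ) → ℝ :=
  fun x => ∑ j, ginv x i j * covDVec g ginv X j k x

/-- Covariant derivative `∇_i ω_j` of a covector field. -/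
def covDCo {n : ℕ} (g ginv : (Fin n → ℝ) → Matrix (Fin n) (Fin n) ℝ)
    (ω : Fin n → (Fin n → ℝ) → ℝ) (i j : Fin n) : (Fin n → ℝ) → ℝ :=
  fun x => pd i (ω j) x - ∑ m, christoffel g ginv m i j x * ω m x

/-- Rough Laplacian `∇_i ∇^i` acting on a covector field. -/
def lapCo {n : ℕ} (g ginv : (Fin n → ℝ) → Matrix (Fin n) (Fin n) ℝ)
    (ω : Fin n → (Fin n → ℝ) → ℝ) (k : Fin n) : (Fin n → ℝ) → ℝ :=
  fun x => ∑ i, ∑ j, ginv x i j *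
    (pd i (covDCo g ginv ω j k) x - ∑ m, christoffel g ginv m i j x * covDCo g ginv ω m k x
      - ∑ m, christoffel g ginv m i k x * covDCo g ginv ω j m x)

/-- Rough Laplacian `∇_i ∇^i` acting on a vector field, componentwise. -/
def lapVec {n : ℕ} (g ginv : (Fin n → ℝ) → Matrix (Fin n) (Fin n) ℝ)
    (X : (Fin n → ℝ) → Fin n → ℝ) (k : Fin n) : (Fin n → ℝ) → ℝ :=
  fun x => ∑ i, ∑ j, ginv x i j *
    (pd i (covDVec g ginv X j k) x + ∑ m, christoffel g ginv k i m x * covDVec g ginv X j m x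
      - ∑ m, christoffel g ginv m i j x * covDVec g ginv X m k x)

/-- Ricci tensor `Ric_{jk}` of the metric `g`. -/
def ricci {n : ℕ} (g ginv : (Fin n → ℝ) → Matrix (Fin n) (Fin n) ℝ) (j k : Fin n) :
    (Fin n → ℝ) → ℝ :=
  fun x => ∑ i, (pd i (christoffel g ginv i j k) x - pd j (christoffel g ginv i i k) x
    + ∑ m, (christoffel g ginv i i m x * christoffel g ginv m j k x
      - christoffel g ginv i j m x * christoffel g ginv m i k x))

/-- Scalar curvature of the metric `g`. -/
def scalCurv {n : ℕ} (g ginv : (Fin n → ℝ) → Matrix (Fin n) (Fin n) ℝ) :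
    (Fin n → ℝ) → ℝ :=
  fun x => ∑ j, ∑ k, ginv x j k * ricci g ginv j k x

namespace Homo
set_option linter.unusedSectionVars false

variable {n : ℕ}



lemma pd_congr {f f' : (Fin n → ℝ) → ℝ} (h : ∀ x, f x = f' x) (i : Fin n) :
    pd i f = pd i f' := by
  have : f = f' := funext h
  rw [this]

lemma pd_add {f f' : (Fin n → ℝ) → ℝ} {x : Fin n → ℝ} (i : Fin n)
    (hf : DifferentiableAt ℝ f x) (hf' : DifferentiableAt ℝ f' x) :
    pd i (fun y => f y + f' y) x = pd i f x + pd i f' x := by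
  simp [pd, fderiv_fun_add hf hf']

lemma pd_sub {f f' : (Fin n → ℝ) → ℝ} {x : Fin n → ℝ} (i : Fin n)
    (hf : DifferentiableAt ℝ f x) (hf' : DifferentiableAt ℝ f' x) :
    pd i (fun y => f y - f' y) x = pd i f x - pd i f' x := by
  simp [pd, fderiv_fun_sub hf hf']


lemma pd_neg {f : (Fin n → ℝ) → ℝ} {x : Fin n → ℝ} (i : Fin n) :
    pd i (fun y => -(f y)) x = -pd i f x := by
  simp [pd, fderiv_neg]

lemma pd_const {x : Fin n → ℝ} (i : Fin n) (c : ℝ) :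
    pd i (fun _ => c) x = 0 := by
  simp [pd]

lemma pd_mul {f f' : (Fin n → ℝ) → ℝ} {x : Fin n → ℝ} (i : Fin n)
    (hf : DifferentiableAt ℝ f x) (hf' : DifferentiableAt ℝ f' x) :
    pd i (fun y => f y * f' y) x = pd i f x * f' x + f x * pd i f' x := by
  simp [pd, fderiv_fun_mul hf hf']
  ring

lemma pd_const_mul {f : (Fin n → ℝ) → ℝ} {x : Fin n → ℝ} (i : Fin n) (c : ℝ)
    (hf : DifferentiableAt ℝ f x) :
    pd i (fun y => c * f y) x = c * pd i f x := by
  simp [pd, fderiv_const_mul hf]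

lemma pd_sum {ι : Type*} {s : Finset ι} {F : ι → (Fin n → ℝ) → ℝ} {x : Fin n → ℝ} (i : Fin n)
    (hF : ∀ k ∈ s, DifferentiableAt ℝ (F k) x) :
    pd i (fun y => ∑ k ∈ s, F k y) x = ∑ k ∈ s, pd i (F k) x := by
  simp [pd, fderiv_fun_sum hF]

lemma contDiff_pd {m : WithTop ℕ∞} {N : WithTop ℕ∞} {f : (Fin n → ℝ) → ℝ} (i : Fin n)
    (hf : ContDiff ℝ N f) (hmn : m + 1 ≤ N) : ContDiff ℝ m (pd i f) :=
  (hf.fderiv_right hmn).clm_apply contDiff_const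

lemma pd_comm {f : (Fin n → ℝ) → ℝ} {N : WithTop ℕ∞} (hf : ContDiff ℝ N f) (h2 : 2 ≤ N)
    (i j : Fin n) (x : Fin n → ℝ) :
    pd i (pd j f) x = pd j (pd i f) x := by
  have hd : DifferentiableAt ℝ (fderiv ℝ f) x := by
    have : ContDiff ℝ 1 (fderiv ℝ f) := hf.fderiv_right (by
      exact le_trans (by norm_num) h2)
    exact (this.differentiable one_ne_zero).differentiableAt
  have key : ∀ a b : Fin n,
      pd a (pd b f) x = fderiv ℝ (fderiv ℝ f) x (Pi.single a 1) (Pi.single b 1) := by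
    intro a b
    show fderiv ℝ (fun y => (fderiv ℝ f y) (Pi.single b 1)) x (Pi.single a 1) = _
    rw [fderiv_clm_apply hd (differentiableAt_const _)]
    simp
  rw [key i j, key j i]
  exact ((hf.contDiffAt).isSymmSndFDerivAt (by simpa [minSmoothness_of_isRCLikeNormedField] using h2)) _ _



variable {n : ℕ}

lemma contDiff_top_pd {f : (Fin n → ℝ) → ℝ} (i : Fin n)
    (hf : ContDiff ℝ (⊤ : ℕ∞) f) : ContDiff ℝ (⊤ : ℕ∞) (pd i f) :=
  contDiff_pd i hf (by simp)


lemma sum4_comm {n : ℕ} (F : Fin n → Fin n → Fin n → Fin n → ℝ) :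
    ∑ m, ∑ a, ∑ b, ∑ l, F m a b l = ∑ b, ∑ l, ∑ m, ∑ a, F m a b l := by
  calc ∑ m, ∑ a, ∑ b, ∑ l, F m a b l
      = ∑ m, ∑ b, ∑ a, ∑ l, F m a b l :=
        Finset.sum_congr rfl fun m _ => Finset.sum_comm
    _ = ∑ b, ∑ m, ∑ a, ∑ l, F m a b l := Finset.sum_comm
    _ = ∑ b, ∑ m, ∑ l, ∑ a, F m a b l :=
        Finset.sum_congr rfl fun b _ => Finset.sum_congr rfl fun m _ => Finset.sum_comm
    _ = ∑ b, ∑ l, ∑ m, ∑ a, F m a b l :=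
        Finset.sum_congr rfl fun b _ => Finset.sum_comm

section geom
variable (g ginv : (Fin n → ℝ) → Matrix (Fin n) (Fin n) ℝ)

/-- `γ_j = ∑_m Γ^m_{mj}` -/
def gam (j : Fin n) : (Fin n → ℝ) → ℝ := fun x => ∑ m, christoffel g ginv m m j x

/-- `G^k = ∑_{ij} g^{ij} Γ^k_{ij}` -/
def GG (k : Fin n) : (Fin n → ℝ) → ℝ :=
  fun x => ∑ i, ∑ j, ginv x i j * christoffel g ginv k i j x

variable (hgs : ∀ i j, ContDiff ℝ (⊤ : ℕ∞) fun x => g x i j)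
    (hginvs : ∀ i j, ContDiff ℝ (⊤ : ℕ∞) fun x => ginv x i j)
    (hsymm : ∀ x, (g x).IsSymm)
    (hinv : ∀ x, g x * ginv x = 1)

include hgs hginvs in
lemma christoffel_contDiff (k i j : Fin n) : ContDiff ℝ (⊤ : ℕ∞) (christoffel g ginv k i j) := by
  unfold christoffel
  exact contDiff_const.mul (ContDiff.sum fun l _ => (hginvs k l).mul
    (((contDiff_top_pd i (hgs l j)).add (contDiff_top_pd j (hgs l i))).sub
      (contDiff_top_pd l (hgs i j))))

include hgs hginvs in
lemma gam_contDiff (j : Fin n) : ContDiff ℝ (⊤ : ℕ∞) (gam g ginv j) :=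
  ContDiff.sum fun m _ => christoffel_contDiff g ginv hgs hginvs m m j

include hgs hginvs in
lemma GG_contDiff (k : Fin n) : ContDiff ℝ (⊤ : ℕ∞) (GG g ginv k) :=
  ContDiff.sum fun i _ => ContDiff.sum fun j _ =>
    (hginvs i j).mul (christoffel_contDiff g ginv hgs hginvs k i j)

include hinv in
lemma hinv' : ∀ x, ginv x * g x = 1 := fun x => mul_eq_one_comm.mp (hinv x)

include hsymm hinv in
lemma ginv_symm (x : Fin n → ℝ) : (ginv x).IsSymm := by
  have h1 : ginv x = (g x)⁻¹ := (Matrix.inv_eq_right_inv (hinv x)).symm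
  have h2 : Matrix.transpose (g x) = g x := hsymm x
  show Matrix.transpose (ginv x) = ginv x
  rw [h1, Matrix.transpose_nonsing_inv, h2]

include hsymm in
lemma gE (x : Fin n → ℝ) (i j : Fin n) : g x i j = g x j i := (hsymm x).apply j i

include hsymm hinv in
lemma ginvE (x : Fin n → ℝ) (i j : Fin n) : ginv x i j = ginv x j i :=
  (ginv_symm g ginv hsymm hinv x).apply j i

include hinv in
lemma sum_g_ginv (x : Fin n → ℝ) (a b : Fin n) :
    ∑ m, g x a m * ginv x m b = if a = b then 1 else 0 := by
  have := congrArg (fun M => M a b) (hinv x)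
  simpa [Matrix.mul_apply, Matrix.one_apply] using this

include hinv in
lemma sum_ginv_g (x : Fin n → ℝ) (a b : Fin n) :
    ∑ m, ginv x a m * g x m b = if a = b then 1 else 0 := by
  have := congrArg (fun M => M a b) (hinv' g ginv hinv x)
  simpa [Matrix.mul_apply, Matrix.one_apply] using this

include hsymm in
/-- Γ is symmetric in its lower indices. -/
lemma christoffel_symm (k i j : Fin n) :
    christoffel g ginv k i j = christoffel g ginv k j i := by
  funext x
  unfold christoffel
  congr 1
  apply Finset.sum_congr rfl
  intro l _
  have e1 : (fun y => g y i j) = fun y => g y j i := funext fun y => gE g hsymm y i j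
  rw [e1]
  ring

lemma dAt {f : (Fin n → ℝ) → ℝ} (hf : ContDiff ℝ (⊤ : ℕ∞) f) (x : Fin n → ℝ) :
    DifferentiableAt ℝ f x :=
  (hf.differentiable (by simp)).differentiableAt

include hsymm in
lemma pdgE (a u v : Fin n) (x : Fin n → ℝ) :
    pd a (fun y => g y u v) x = pd a (fun y => g y v u) x :=
  congrFun (pd_congr (fun y => gE g hsymm y u v) a) x

include hgs hginvs hinv in
lemma pd_ginv (k a b : Fin n) (x : Fin n → ℝ) :
    pd k (fun y => ginv y a b) x
      = -∑ l, ∑ m, ginv x a l * pd k (fun y => g y l m) x * ginv x m b := by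
  have hD : ∀ a b : Fin n,
      ∑ m, (pd k (fun y => g y a m) x * ginv x m b
        + g x a m * pd k (fun y => ginv y m b) x) = 0 := by
    intro a b
    have h0 : pd k (fun y => ∑ m, g y a m * ginv y m b) x = 0 := by
      rw [pd_congr (f' := fun _ => if a = b then (1:ℝ) else 0)
        (fun y => sum_g_ginv g ginv hinv y a b) k]
      exact pd_const k _
    rw [pd_sum k (fun m _ => (dAt (hgs a m) x).fun_mul (dAt (hginvs m b) x))] at h0
    rw [← h0]
    exact Finset.sum_congr rfl fun m _ =>
      (pd_mul k (dAt (hgs a m) x) (dAt (hginvs m b) x)).symm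
  have key : ∀ l : Fin n, ∑ m, g x l m * pd k (fun y => ginv y m b) x
      = -∑ m, pd k (fun y => g y l m) x * ginv x m b := by
    intro l
    have h1 := hD l b
    rw [Finset.sum_add_distrib] at h1
    linarith
  calc pd k (fun y => ginv y a b) x
      = ∑ m, (if a = m then (1:ℝ) else 0) * pd k (fun y => ginv y m b) x := by
        simp
    _ = ∑ m, (∑ l, ginv x a l * g x l m) * pd k (fun y => ginv y m b) x := by
        refine Finset.sum_congr rfl fun m _ => ?_
        rw [sum_ginv_g g ginv hinv x a m]
    _ = ∑ l, ginv x a l * ∑ m, g x l m * pd k (fun y => ginv y m b) x := by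
        simp only [Finset.sum_mul, Finset.mul_sum, mul_assoc]
        rw [Finset.sum_comm]
    _ = ∑ l, ginv x a l * -∑ m, pd k (fun y => g y l m) x * ginv x m b := by
        refine Finset.sum_congr rfl fun l _ => ?_
        rw [key l]
    _ = -∑ l, ∑ m, ginv x a l * pd k (fun y => g y l m) x * ginv x m b := by
        rw [← Finset.sum_neg_distrib]
        refine Finset.sum_congr rfl fun l _ => ?_
        rw [mul_neg, Finset.mul_sum]
        refine congrArg Neg.neg (Finset.sum_congr rfl fun m _ => by ring)

include hgs hginvs hsymm hinv in
lemma christoffel_g_contract (p q c : Fin n) (x : Fin n → ℝ) :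
    ∑ m, christoffel g ginv m p q x * g x m c
      = (1/2) * (pd p (fun y => g y c q) x + pd q (fun y => g y c p) x
          - pd c (fun y => g y p q) x) := by
  calc ∑ m, christoffel g ginv m p q x * g x m c
      = ∑ m, ∑ l, (ginv x l m * g x m c) * ((1/2) * (pd p (fun y => g y l q) x
          + pd q (fun y => g y l p) x - pd l (fun y => g y p q) x)) := by
        refine Finset.sum_congr rfl fun m _ => ?_
        simp only [christoffel, Finset.mul_sum, Finset.sum_mul]
        refine Finset.sum_congr rfl fun l _ => ?_
        rw [ginvE g ginv hsymm hinv x l m]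
        ring
    _ = ∑ l, (∑ m, ginv x l m * g x m c) * ((1/2) * (pd p (fun y => g y l q) x
          + pd q (fun y => g y l p) x - pd l (fun y => g y p q) x)) := by
        rw [Finset.sum_comm]
        refine Finset.sum_congr rfl fun l _ => ?_
        rw [Finset.sum_mul]
    _ = ∑ l, (if l = c then (1:ℝ) else 0) * ((1/2) * (pd p (fun y => g y l q) x
          + pd q (fun y => g y l p) x - pd l (fun y => g y p q) x)) := by
        refine Finset.sum_congr rfl fun l _ => ?_
        rw [sum_ginv_g g ginv hinv x l c]
    _ = (1/2) * (pd p (fun y => g y c q) x + pd q (fun y => g y c p) x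
          - pd c (fun y => g y p q) x) := by
        simp

include hgs hginvs hsymm hinv in
lemma I3 (k i j : Fin n) (x : Fin n → ℝ) :
    pd k (fun y => g y i j) x
      = ∑ m, (christoffel g ginv m k i x * g x m j + christoffel g ginv m k j x * g x m i) := by
  rw [Finset.sum_add_distrib, christoffel_g_contract g ginv hgs hginvs hsymm hinv k i j x,
    christoffel_g_contract g ginv hgs hginvs hsymm hinv k j i x]
  rw [pdgE g hsymm i j k x, pdgE g hsymm j k i x, pdgE g hsymm k j i x, pdgE g hsymm i k j x]
  ring

include hgs hginvs hsymm hinv in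
lemma I4 (k i j : Fin n) (x : Fin n → ℝ) :
    pd k (fun y => ginv y i j) x
      = -∑ m, (christoffel g ginv i k m x * ginv x m j
          + christoffel g ginv j k m x * ginv x i m) := by
  rw [pd_ginv g ginv hgs hginvs hinv k i j x]
  congr 1
  calc ∑ l, ∑ m, ginv x i l * pd k (fun y => g y l m) x * ginv x m j
      = ∑ l, ∑ m, ∑ p, ((ginv x i l * christoffel g ginv p k l x) * (g x p m * ginv x m j)
          + (ginv x i l * g x l p) * (christoffel g ginv p k m x * ginv x m j)) := by
        refine Finset.sum_congr rfl fun l _ => Finset.sum_congr rfl fun m _ => ?_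
        rw [I3 g ginv hgs hginvs hsymm hinv k l m x, Finset.mul_sum, Finset.sum_mul]
        refine Finset.sum_congr rfl fun p _ => ?_
        rw [gE g hsymm x p l]
        ring
    _ = (∑ l, ∑ m, ∑ p, (ginv x i l * christoffel g ginv p k l x) * (g x p m * ginv x m j))
        + ∑ l, ∑ m, ∑ p, (ginv x i l * g x l p) * (christoffel g ginv p k m x * ginv x m j) := by
        simp only [Finset.sum_add_distrib]
    _ = (∑ l, ∑ p, (ginv x i l * christoffel g ginv p k l x) * ∑ m, g x p m * ginv x m j)
        + ∑ m, ∑ p, (∑ l, ginv x i l * g x l p) * (christoffel g ginv p k m x * ginv x m j) := by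
        congr 1
        · refine Finset.sum_congr rfl fun l _ => ?_
          rw [Finset.sum_comm]
          refine Finset.sum_congr rfl fun p _ => ?_
          rw [Finset.mul_sum]
        · rw [Finset.sum_comm]
          refine Finset.sum_congr rfl fun m _ => ?_
          rw [Finset.sum_comm]
          refine Finset.sum_congr rfl fun p _ => ?_
          rw [Finset.sum_mul]
    _ = (∑ l, ginv x i l * christoffel g ginv j k l x)
        + ∑ m, christoffel g ginv i k m x * ginv x m j := by
        congr 1
        · refine Finset.sum_congr rfl fun l _ => ?_
          have hδ : ∀ p, (∑ m, g x p m * ginv x m j) = if p = j then (1:ℝ) else 0 :=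
            fun p => sum_g_ginv g ginv hinv x p j
          simp only [hδ]
          simp
        · refine Finset.sum_congr rfl fun m _ => ?_
          have hδ : ∀ p, (∑ l, ginv x i l * g x l p) = if i = p then (1:ℝ) else 0 :=
            fun p => sum_ginv_g g ginv hinv x i p
          simp only [hδ]
          simp
    _ = ∑ m, (christoffel g ginv i k m x * ginv x m j
          + christoffel g ginv j k m x * ginv x i m) := by
        rw [Finset.sum_add_distrib]
        rw [add_comm]
        congr 1
        refine Finset.sum_congr rfl fun m _ => ?_
        ring

include hgs hginvs hsymm hinv in
lemma gam_eq (j : Fin n) :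
    gam g ginv j = fun x => (1/2) * ∑ m, ∑ l, ginv x m l * pd j (fun y => g y l m) x := by
  funext x
  have S13 : ∑ m, ∑ l, ginv x m l * pd l (fun y => g y m j) x
      = ∑ m, ∑ l, ginv x m l * pd m (fun y => g y l j) x := by
    rw [Finset.sum_comm]
    exact Finset.sum_congr rfl fun a _ => Finset.sum_congr rfl fun b _ => by
      rw [ginvE g ginv hsymm hinv x b a]
  calc gam g ginv j x
      = ∑ m, ∑ l, ((1/2) * (ginv x m l * pd m (fun y => g y l j) x)
          + (1/2) * (ginv x m l * pd j (fun y => g y l m) x)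
          - (1/2) * (ginv x m l * pd l (fun y => g y m j) x)) := by
        simp only [gam, christoffel, Finset.mul_sum]
        exact Finset.sum_congr rfl fun m _ => Finset.sum_congr rfl fun l _ => by ring
    _ = (1/2) * (∑ m, ∑ l, ginv x m l * pd m (fun y => g y l j) x)
        + (1/2) * (∑ m, ∑ l, ginv x m l * pd j (fun y => g y l m) x)
        - (1/2) * (∑ m, ∑ l, ginv x m l * pd l (fun y => g y m j) x) := by
        simp only [Finset.sum_add_distrib, Finset.sum_sub_distrib, Finset.mul_sum]
    _ = (1/2) * ∑ m, ∑ l, ginv x m l * pd j (fun y => g y l m) x := by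
        rw [S13]; ring

include hgs hginvs hsymm hinv in
lemma curl_gam (i j : Fin n) (x : Fin n → ℝ) :
    pd i (gam g ginv j) x = pd j (gam g ginv i) x := by
  have expand : ∀ a b : Fin n, pd a (gam g ginv b) x
      = (1/2) * ∑ m, ∑ l, (pd a (fun y => ginv y m l) x * pd b (fun y => g y l m) x
          + ginv x m l * pd a (pd b (fun y => g y l m)) x) := by
    intro a b
    rw [gam_eq g ginv hgs hginvs hsymm hinv b]
    rw [pd_const_mul a _ (dAt (ContDiff.sum fun m (_ : m ∈ Finset.univ) =>
      ContDiff.sum fun l (_ : l ∈ Finset.univ) =>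
        (hginvs m l).mul (contDiff_top_pd b (hgs l m))) x)]
    congr 1
    rw [pd_sum a (fun m _ => dAt (ContDiff.sum fun l (_ : l ∈ Finset.univ) =>
      (hginvs m l).mul (contDiff_top_pd b (hgs l m))) x)]
    refine Finset.sum_congr rfl fun m _ => ?_
    rw [pd_sum a (fun l _ => dAt ((hginvs m l).mul (contDiff_top_pd b (hgs l m))) x)]
    refine Finset.sum_congr rfl fun l _ => ?_
    exact pd_mul a (dAt (hginvs m l) x) (dAt (contDiff_top_pd b (hgs l m)) x)
  rw [expand i j, expand j i]
  congr 1
  simp only [Finset.sum_add_distrib]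
  congr 1
  · -- first-derivative part
    have PA : ∀ a b : Fin n,
        ∑ m, ∑ l, pd a (fun y => ginv y m l) x * pd b (fun y => g y l m) x
          = -∑ m, ∑ p, ∑ q, ∑ l, ginv x m p * pd a (fun y => g y p q) x
              * (ginv x q l * pd b (fun y => g y l m) x) := by
      intro a b
      rw [← Finset.sum_neg_distrib]
      refine Finset.sum_congr rfl fun m _ => ?_
      calc ∑ l, pd a (fun y => ginv y m l) x * pd b (fun y => g y l m) x
          = ∑ l, -∑ p, ∑ q, ginv x m p * pd a (fun y => g y p q) x
              * (ginv x q l * pd b (fun y => g y l m) x) := by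
            refine Finset.sum_congr rfl fun l _ => ?_
            rw [pd_ginv g ginv hgs hginvs hinv a m l x, neg_mul, Finset.sum_mul]
            refine congrArg Neg.neg (Finset.sum_congr rfl fun p _ => ?_)
            rw [Finset.sum_mul]
            exact Finset.sum_congr rfl fun q _ => by ring
        _ = -∑ l, ∑ p, ∑ q, ginv x m p * pd a (fun y => g y p q) x
              * (ginv x q l * pd b (fun y => g y l m) x) := by
            rw [Finset.sum_neg_distrib]
        _ = -∑ p, ∑ q, ∑ l, ginv x m p * pd a (fun y => g y p q) x
              * (ginv x q l * pd b (fun y => g y l m) x) := by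
            congr 1
            rw [Finset.sum_comm]
            exact Finset.sum_congr rfl fun p _ => Finset.sum_comm
    rw [PA i j, PA j i]
    congr 1
    rw [sum4_comm]
    exact Finset.sum_congr rfl fun m _ => Finset.sum_congr rfl fun p _ =>
      Finset.sum_congr rfl fun q _ => Finset.sum_congr rfl fun l _ => by ring
  · -- second-derivative part
    exact Finset.sum_congr rfl fun m _ => Finset.sum_congr rfl fun l _ => by
      rw [pd_comm (hgs l m) (WithTop.coe_le_coe.mpr le_top) i j x]

include hgs hginvs hsymm hinv in
lemma gid (k : Fin n) (x : Fin n → ℝ) :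
    GG g ginv k x = -(∑ i, pd i (fun y => ginv y i k) x)
      - ∑ i, ginv x i k * gam g ginv i x := by
  have pd_part : -(∑ i, pd i (fun y => ginv y i k) x)
      = ∑ i, ∑ j, ∑ l, ginv x i j * pd i (fun y => g y j l) x * ginv x l k := by
    rw [← Finset.sum_neg_distrib]
    refine Finset.sum_congr rfl fun i _ => ?_
    rw [pd_ginv g ginv hgs hginvs hinv i i k x, neg_neg]
  have gam_part : ∑ i, ginv x i k * gam g ginv i x
      = ∑ i, ∑ m, ∑ l, (1/2) * (ginv x i k * (ginv x m l * pd i (fun y => g y l m) x)) := by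
    refine Finset.sum_congr rfl fun i _ => ?_
    rw [gam_eq g ginv hgs hginvs hsymm hinv i]
    simp only [Finset.mul_sum]
    exact Finset.sum_congr rfl fun m _ => Finset.sum_congr rfl fun l _ => by ring
  have X2 : ∑ i, ∑ j, ∑ l, ginv x i j * pd i (fun y => g y j l) x * ginv x l k
      = ∑ i, ∑ j, ∑ l, ginv x i j * ginv x k l * pd i (fun y => g y l j) x := by
    refine Finset.sum_congr rfl fun i _ => Finset.sum_congr rfl fun j _ =>
      Finset.sum_congr rfl fun l _ => ?_
    rw [ginvE g ginv hsymm hinv x l k, pdgE g hsymm i j l x]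
    ring
  have ZW : ∑ i, ∑ m, ∑ l, (1/2) * (ginv x i k * (ginv x m l * pd i (fun y => g y l m) x))
      = ∑ i, ∑ j, ∑ l, (1/2) * (ginv x i j * ginv x k l * pd l (fun y => g y i j) x) := by
    calc ∑ i, ∑ m, ∑ l, (1/2) * (ginv x i k * (ginv x m l * pd i (fun y => g y l m) x))
        = ∑ m, ∑ l, ∑ i, (1/2) * (ginv x i k * (ginv x m l * pd i (fun y => g y l m) x)) := by
          rw [Finset.sum_comm]
          exact Finset.sum_congr rfl fun m _ => Finset.sum_comm
      _ = ∑ i, ∑ j, ∑ l, (1/2) * (ginv x i j * ginv x k l * pd l (fun y => g y i j) x) := by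
          refine Finset.sum_congr rfl fun a _ => Finset.sum_congr rfl fun b _ =>
            Finset.sum_congr rfl fun c _ => ?_
          rw [ginvE g ginv hsymm hinv x c k, ginvE g ginv hsymm hinv x a b,
            pdgE g hsymm c b a x]
          ring
  have GGexp : GG g ginv k x
      = (∑ i, ∑ j, ∑ l, ginv x i j * ginv x k l * pd i (fun y => g y l j) x)
        - ∑ i, ∑ j, ∑ l, (1/2) * (ginv x i j * ginv x k l * pd l (fun y => g y i j) x) := by
    have swapXY : ∑ i, ∑ j, ∑ l, (1/2) * (ginv x i j * ginv x k l * pd j (fun y => g y l i) x)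
        = ∑ i, ∑ j, ∑ l, (1/2) * (ginv x i j * ginv x k l * pd i (fun y => g y l j) x) := by
      rw [Finset.sum_comm]
      refine Finset.sum_congr rfl fun a _ => Finset.sum_congr rfl fun b _ =>
        Finset.sum_congr rfl fun c _ => ?_
      rw [ginvE g ginv hsymm hinv x b a]
    calc GG g ginv k x
        = ∑ i, ∑ j, ∑ l, ((1/2) * (ginv x i j * ginv x k l * pd i (fun y => g y l j) x)
            + (1/2) * (ginv x i j * ginv x k l * pd j (fun y => g y l i) x)
            - (1/2) * (ginv x i j * ginv x k l * pd l (fun y => g y i j) x)) := by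
          simp only [GG, christoffel, Finset.mul_sum]
          exact Finset.sum_congr rfl fun i _ => Finset.sum_congr rfl fun j _ =>
            Finset.sum_congr rfl fun l _ => by ring
      _ = (∑ i, ∑ j, ∑ l, (1/2) * (ginv x i j * ginv x k l * pd i (fun y => g y l j) x))
          + (∑ i, ∑ j, ∑ l, (1/2) * (ginv x i j * ginv x k l * pd j (fun y => g y l i) x))
          - ∑ i, ∑ j, ∑ l, (1/2) * (ginv x i j * ginv x k l * pd l (fun y => g y i j) x) := by
          simp only [Finset.sum_add_distrib, Finset.sum_sub_distrib]
      _ = (∑ i, ∑ j, ∑ l, ginv x i j * ginv x k l * pd i (fun y => g y l j) x)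
          - ∑ i, ∑ j, ∑ l, (1/2) * (ginv x i j * ginv x k l * pd l (fun y => g y i j) x) := by
          rw [swapXY]
          congr 1
          rw [← Finset.sum_add_distrib]
          refine Finset.sum_congr rfl fun i _ => ?_
          rw [← Finset.sum_add_distrib]
          refine Finset.sum_congr rfl fun j _ => ?_
          rw [← Finset.sum_add_distrib]
          exact Finset.sum_congr rfl fun l _ => by ring
  rw [GGexp, pd_part, gam_part, X2, ZW]


lemma lapB_eq (f : (Fin n → ℝ) → ℝ) (x : Fin n → ℝ) :
    lapB g ginv f x = (∑ i, ∑ j, ginv x i j * pd i (pd j f) x)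
      - ∑ k, GG g ginv k x * pd k f x := by
  unfold lapB hessg GG
  simp only [mul_sub, Finset.sum_sub_distrib]
  congr 1
  calc ∑ i, ∑ j, ginv x i j * ∑ k, christoffel g ginv k i j x * pd k f x
      = ∑ i, ∑ j, ∑ k, ginv x i j * christoffel g ginv k i j x * pd k f x := by
        refine Finset.sum_congr rfl fun i _ => Finset.sum_congr rfl fun j _ => ?_
        rw [Finset.mul_sum]
        exact Finset.sum_congr rfl fun k _ => by ring
    _ = ∑ i, ∑ k, ∑ j, ginv x i j * christoffel g ginv k i j x * pd k f x :=
        Finset.sum_congr rfl fun i _ => Finset.sum_comm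
    _ = ∑ k, ∑ i, ∑ j, ginv x i j * christoffel g ginv k i j x * pd k f x :=
        Finset.sum_comm
    _ = ∑ k, (∑ i, ∑ j, ginv x i j * christoffel g ginv k i j x) * pd k f x := by
        refine Finset.sum_congr rfl fun k _ => ?_
        rw [Finset.sum_mul]
        exact Finset.sum_congr rfl fun i _ => by rw [Finset.sum_mul]

include hsymm in
lemma chrE (k i j : Fin n) (x : Fin n → ℝ) :
    christoffel g ginv k i j x = christoffel g ginv k j i x :=
  congrFun (christoffel_symm g ginv hsymm k i j) x

section homo
variable (h : (Fin n → ℝ) → Fin n → ℝ) (hh : ∀ k, ContDiff ℝ (⊤ : ℕ∞) fun x => h x k)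
  (hck : ∀ x i k, covDVecUp g ginv h i k x + covDVecUp g ginv h k i x = 2 * ginv x i k)
  (hdivh : ∀ x, ∑ i, covDVec g ginv h i i x = (n : ℝ))

include hgs hginvs hsymm hinv hck in
/-- the homothety equation in "Lie derivative of the inverse metric" form -/
lemma alpha (x : Fin n → ℝ) (i k : Fin n) :
    (∑ m, ginv x i m * pd m (fun y => h y k) x)
      + (∑ m, ginv x k m * pd m (fun y => h y i) x)
      - (∑ m, h x m * pd m (fun y => ginv y i k) x) = 2 * ginv x i k := by
  have E1 : covDVecUp g ginv h i k x + covDVecUp g ginv h k i x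
      = (∑ m, ginv x i m * pd m (fun y => h y k) x)
        + (∑ m, ginv x k m * pd m (fun y => h y i) x)
        + ∑ m, ∑ j, (h x m * christoffel g ginv i m j x * ginv x j k
            + h x m * christoffel g ginv k m j x * ginv x i j) := by
    simp only [covDVecUp, covDVec, mul_add, Finset.sum_add_distrib, Finset.mul_sum]
    have T1 : ∑ j, ∑ m, ginv x i j * (christoffel g ginv k j m x * h x m)
        = ∑ m, ∑ j, h x m * christoffel g ginv k m j x * ginv x i j := by
      rw [Finset.sum_comm]
      refine Finset.sum_congr rfl fun m _ => Finset.sum_congr rfl fun j _ => ?_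
      rw [chrE g ginv hsymm k j m x]
      ring
    have T2 : ∑ j, ∑ m, ginv x k j * (christoffel g ginv i j m x * h x m)
        = ∑ m, ∑ j, h x m * christoffel g ginv i m j x * ginv x j k := by
      rw [Finset.sum_comm]
      refine Finset.sum_congr rfl fun m _ => Finset.sum_congr rfl fun j _ => ?_
      rw [chrE g ginv hsymm i j m x, ginvE g ginv hsymm hinv x k j]
      ring
    rw [T1, T2, ← Finset.sum_add_distrib]
    simp only [← Finset.sum_add_distrib]
    refine Finset.sum_congr rfl fun m _ => ?_
    rw [Finset.sum_add_distrib]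
    ring
  have E2 : (∑ m, h x m * pd m (fun y => ginv y i k) x)
      = -∑ m, ∑ j, (h x m * christoffel g ginv i m j x * ginv x j k
          + h x m * christoffel g ginv k m j x * ginv x i j) := by
    rw [← Finset.sum_neg_distrib]
    refine Finset.sum_congr rfl fun m _ => ?_
    rw [I4 g ginv hgs hginvs hsymm hinv m i k x, mul_neg, Finset.mul_sum]
    rw [← Finset.sum_neg_distrib, ← Finset.sum_neg_distrib]
    refine Finset.sum_congr rfl fun j _ => ?_
    ring
  have := hck x i k
  rw [E1] at this
  rw [E2]
  linarith [this]

include hsymm hdivh in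
/-- div h = n in coordinates with the trace of Christoffel -/
lemma divconv (x : Fin n → ℝ) :
    (∑ i, pd i (fun y => h y i) x) + ∑ m, gam g ginv m x * h x m = (n : ℝ) := by
  have := hdivh x
  simp only [covDVec, Finset.sum_add_distrib] at this
  rw [← this]
  congr 1
  unfold gam
  rw [Finset.sum_comm]
  refine Finset.sum_congr rfl fun i _ => ?_
  rw [Finset.sum_mul]

include hsymm hinv in
lemma pdginvE (a u v : Fin n) (x : Fin n → ℝ) :
    pd a (fun y => ginv y u v) x = pd a (fun y => ginv y v u) x :=
  congrFun (pd_congr (fun y => ginvE g ginv hsymm hinv y u v) a) x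

include hgs hginvs hsymm hinv hh hck hdivh in
set_option maxHeartbeats 1600000 in
/-- the first-order coefficient identity -/
lemma beta (x : Fin n → ℝ) (k : Fin n) :
    (∑ j, ∑ m, ginv x j m * pd j (pd m (fun y => h y k)) x)
      - (∑ m, GG g ginv m x * pd m (fun y => h y k) x)
      + (∑ m, h x m * pd m (GG g ginv k) x)
      + 2 * GG g ginv k x = 0 := by
  -- differentiability/smoothness helpers
  have spdh : ∀ (m a : Fin n), ContDiff ℝ (⊤ : ℕ∞) (pd m (fun y => h y a)) :=
    fun m a => contDiff_top_pd m (hh a)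
  have spdginv : ∀ (m a b : Fin n), ContDiff ℝ (⊤ : ℕ∞) (pd m (fun y => ginv y a b)) :=
    fun m a b => contDiff_top_pd m (hginvs a b)
  have sgam : ∀ j : Fin n, ContDiff ℝ (⊤ : ℕ∞) (gam g ginv j) := fun j =>
    gam_contDiff g ginv hgs hginvs j
  have sS1 : ∀ j : Fin n, ContDiff ℝ (⊤ : ℕ∞) (fun y => ∑ m, ginv y j m * pd m (fun z => h z k) y) :=
    fun j => ContDiff.sum fun m _ => (hginvs j m).mul (spdh m k)
  have sS2 : ∀ j : Fin n, ContDiff ℝ (⊤ : ℕ∞) (fun y => ∑ m, ginv y k m * pd m (fun z => h z j) y) :=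
    fun j => ContDiff.sum fun m _ => (hginvs k m).mul (spdh m j)
  have sS3 : ∀ j : Fin n, ContDiff ℝ (⊤ : ℕ∞) (fun y => ∑ m, h y m * pd m (fun z => ginv z j k) y) :=
    fun j => ContDiff.sum fun m _ => (hh m).mul (spdginv m j k)
  -- canonical atoms
  set A := ∑ j, ∑ m, pd j (fun y => ginv y j m) x * pd m (fun y => h y k) x with hA
  set B := ∑ j, ∑ m, ginv x j m * pd j (pd m (fun y => h y k)) x with hB
  set Cc := ∑ j, ∑ m, pd j (fun y => ginv y k m) x * pd m (fun y => h y j) x with hCc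
  set Dd := ∑ j, ∑ m, ginv x k m * pd j (pd m (fun y => h y j)) x with hDd
  set Ee := ∑ j, ∑ m, pd j (fun y => h y m) x * pd m (fun y => ginv y j k) x with hEe
  set Ff := ∑ j, ∑ m, h x m * pd j (pd m (fun y => ginv y j k)) x with hFf
  set R2 := ∑ j, pd j (fun y => ginv y j k) x with hR2
  set P1 := ∑ m, ∑ p, h x p * (ginv x k m * pd m (gam g ginv p) x) with hP1
  set P2 := ∑ m, ∑ p, gam g ginv p x * (ginv x k m * pd m (fun y => h y p) x) with hP2
  set Q1 := ∑ m, ∑ j, gam g ginv j x * ginv x j m * pd m (fun y => h y k) x with hQ1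
  set Q2 := ∑ j, gam g ginv j x * ∑ m, h x m * pd m (fun y => ginv y j k) x with hQ2
  set Q3 := ∑ m, ∑ j, h x m * (ginv x j k * pd m (gam g ginv j) x) with hQ3
  set Q4 := ∑ j, ginv x j k * gam g ginv j x with hQ4
  -- e1 : differentiated homothety identity
  have e1 : A + B + Cc + Dd - Ee - Ff = 2 * R2 := by
    have perj : ∀ j : Fin n,
        (∑ m, (pd j (fun y => ginv y j m) x * pd m (fun y => h y k) x
            + ginv x j m * pd j (pd m (fun y => h y k)) x))
          + (∑ m, (pd j (fun y => ginv y k m) x * pd m (fun y => h y j) x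
            + ginv x k m * pd j (pd m (fun y => h y j)) x))
          - (∑ m, (pd j (fun y => h y m) x * pd m (fun y => ginv y j k) x
            + h x m * pd j (pd m (fun y => ginv y j k)) x))
          = 2 * pd j (fun y => ginv y j k) x := by
      intro j
      have hfun : (fun y => (∑ m, ginv y j m * pd m (fun z => h z k) y)
          + (∑ m, ginv y k m * pd m (fun z => h z j) y)
          - (∑ m, h y m * pd m (fun z => ginv z j k) y)) = fun y => 2 * ginv y j k :=
        funext fun y => alpha g ginv hgs hginvs hsymm hinv h hck y j k
      have hd := congrFun (pd_congr (fun y => congrFun hfun y) j) x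
      rw [pd_sub j (((dAt (sS1 j) x).fun_add (dAt (sS2 j) x))) (dAt (sS3 j) x)] at hd
      rw [pd_add j (dAt (sS1 j) x) (dAt (sS2 j) x)] at hd
      rw [pd_sum j (fun m _ => dAt ((hginvs j m).mul (spdh m k)) x)] at hd
      rw [pd_sum j (fun m _ => dAt ((hginvs k m).mul (spdh m j)) x)] at hd
      rw [pd_sum j (fun m _ => dAt ((hh m).mul (spdginv m j k)) x)] at hd
      calc _ = pd j (fun y => 2 * ginv y j k) x := by
            rw [← hd]
            congr 1
            · congr 1
              · exact Finset.sum_congr rfl fun m _ =>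
                  (pd_mul j (dAt (hginvs j m) x) (dAt (spdh m k) x)).symm
              · exact Finset.sum_congr rfl fun m _ =>
                  (pd_mul j (dAt (hginvs k m) x) (dAt (spdh m j) x)).symm
            · exact Finset.sum_congr rfl fun m _ =>
                (pd_mul j (dAt (hh m) x) (dAt (spdginv m j k) x)).symm
        _ = 2 * pd j (fun y => ginv y j k) x := pd_const_mul j 2 (dAt (hginvs j k) x)
    have := Finset.sum_congr rfl (fun j (_ : j ∈ Finset.univ) => perj j)
    simp only [Finset.sum_add_distrib, Finset.sum_sub_distrib] at this
    rw [hA, hB, hCc, hDd, hEe, hFf, hR2, Finset.mul_sum]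
    linarith [this]
  have e2 : Cc = Ee := by
    rw [hCc, hEe, Finset.sum_comm]
    refine Finset.sum_congr rfl fun a _ => Finset.sum_congr rfl fun b _ => ?_
    rw [pdginvE g ginv hsymm hinv b a k x]
    ring
  have e3 : Dd = -(P1 + P2) := by
    have hdive : (fun y => ∑ j, pd j (fun z => h z j) y)
        = fun y => (n : ℝ) - ∑ p, gam g ginv p y * h y p := by
      funext y
      have := divconv g ginv hsymm h hdivh y
      linarith [this]
    have step1 : Dd = ∑ m, ginv x k m * pd m (fun y => ∑ j, pd j (fun z => h z j) y) x := by
      rw [hDd, Finset.sum_comm]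
      refine Finset.sum_congr rfl fun m _ => ?_
      rw [pd_sum m (fun j _ => dAt (spdh j j) x), Finset.mul_sum]
      refine Finset.sum_congr rfl fun j _ => ?_
      rw [pd_comm (hh j) (WithTop.coe_le_coe.mpr le_top) j m x]
    have step2 : ∀ m : Fin n, pd m (fun y => ∑ j, pd j (fun z => h z j) y) x
        = -∑ p, (pd m (gam g ginv p) x * h x p
            + gam g ginv p x * pd m (fun y => h y p) x) := by
      intro m
      rw [pd_congr (fun y => congrFun hdive y) m]
      rw [pd_sub m (differentiableAt_const _)
        (dAt (ContDiff.sum fun p _ => (sgam p).mul (hh p)) x)]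
      rw [pd_const m, pd_sum m (fun p _ => dAt ((sgam p).mul (hh p)) x), zero_sub]
      refine congrArg Neg.neg (Finset.sum_congr rfl fun p _ => ?_)
      exact pd_mul m (dAt (sgam p) x) (dAt (hh p) x)
    calc Dd = ∑ m, ginv x k m * pd m (fun y => ∑ j, pd j (fun z => h z j) y) x := step1
      _ = ∑ m, -∑ p, (h x p * (ginv x k m * pd m (gam g ginv p) x)
            + gam g ginv p x * (ginv x k m * pd m (fun y => h y p) x)) := by
          refine Finset.sum_congr rfl fun m _ => ?_
          rw [step2 m, mul_neg, Finset.mul_sum]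
          refine congrArg Neg.neg (Finset.sum_congr rfl fun p _ => ?_)
          ring
      _ = -(P1 + P2) := by
          rw [hP1, hP2, Finset.sum_neg_distrib]
          congr 1
          simp only [Finset.sum_add_distrib]
  have e4 : ∑ m, GG g ginv m x * pd m (fun y => h y k) x = -(A + Q1) := by
    have perm : ∀ m : Fin n, GG g ginv m x * pd m (fun y => h y k) x
        = -((∑ j, pd j (fun y => ginv y j m) x * pd m (fun y => h y k) x)
          + ∑ j, gam g ginv j x * ginv x j m * pd m (fun y => h y k) x) := by
      intro m
      rw [gid g ginv hgs hginvs hsymm hinv m x]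
      have h1 : (∑ j, pd j (fun y => ginv y j m) x * pd m (fun y => h y k) x)
          = (∑ j, pd j (fun y => ginv y j m) x) * pd m (fun y => h y k) x := by
        rw [Finset.sum_mul]
      have h2 : (∑ j, gam g ginv j x * ginv x j m * pd m (fun y => h y k) x)
          = (∑ j, ginv x j m * gam g ginv j x) * pd m (fun y => h y k) x := by
        rw [Finset.sum_mul]
        exact Finset.sum_congr rfl fun j _ => by ring
      rw [h1, h2]
      ring
    calc ∑ m, GG g ginv m x * pd m (fun y => h y k) x
        = ∑ m, -((∑ j, pd j (fun y => ginv y j m) x * pd m (fun y => h y k) x)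
          + ∑ j, gam g ginv j x * ginv x j m * pd m (fun y => h y k) x) :=
          Finset.sum_congr rfl fun m _ => perm m
      _ = -(A + Q1) := by
          rw [hA, hQ1, Finset.sum_neg_distrib]
          congr 1
          rw [Finset.sum_add_distrib]
          congr 1
          exact Finset.sum_comm
  have gidfun : GG g ginv k = fun y => -(∑ j, pd j (fun z => ginv z j k) y)
      - ∑ j, ginv y j k * gam g ginv j y :=
    funext fun y => gid g ginv hgs hginvs hsymm hinv k y
  have e5 : ∑ m, h x m * pd m (GG g ginv k) x = -(Ff + (Q2 + Q3)) := by
    have perm : ∀ m : Fin n, pd m (GG g ginv k) x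
        = -(∑ j, pd m (pd j (fun z => ginv z j k)) x)
          - ∑ j, (pd m (fun y => ginv y j k) x * gam g ginv j x
              + ginv x j k * pd m (gam g ginv j) x) := by
      intro m
      rw [pd_congr (fun y => congrFun gidfun y) m]
      rw [pd_sub m ((dAt (ContDiff.sum fun j _ => spdginv j j k) x).fun_neg)
        (dAt (ContDiff.sum fun j _ => (hginvs j k).mul (sgam j)) x)]
      rw [pd_neg m, pd_sum m (fun j _ => dAt (spdginv j j k) x),
        pd_sum m (fun j _ => dAt ((hginvs j k).mul (sgam j)) x)]
      congr 1
      exact Finset.sum_congr rfl fun j _ =>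
        pd_mul m (dAt (hginvs j k) x) (dAt (sgam j) x)
    calc ∑ m, h x m * pd m (GG g ginv k) x
        = ∑ m, -((∑ j, h x m * pd m (pd j (fun z => ginv z j k)) x)
            + ∑ j, (h x m * (pd m (fun y => ginv y j k) x * gam g ginv j x)
              + h x m * (ginv x j k * pd m (gam g ginv j) x))) := by
          refine Finset.sum_congr rfl fun m _ => ?_
          rw [perm m, mul_sub, mul_neg, Finset.mul_sum, Finset.mul_sum]
          have hb : ∑ j, h x m * (pd m (fun y => ginv y j k) x * gam g ginv j x
              + ginv x j k * pd m (gam g ginv j) x)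
              = ∑ j, (h x m * (pd m (fun y => ginv y j k) x * gam g ginv j x)
                + h x m * (ginv x j k * pd m (gam g ginv j) x)) :=
            Finset.sum_congr rfl fun j _ => by ring
          rw [hb]
          ring
      _ = -(Ff + (Q2 + Q3)) := by
          rw [hFf, hQ2, hQ3, Finset.sum_neg_distrib]
          congr 1
          simp only [Finset.sum_add_distrib]
          congr 1
          · -- ∑_m ∑_j h^m ∂_m∂_j ginv_{jk} = Ff
            rw [Finset.sum_comm]
            refine Finset.sum_congr rfl fun j _ => Finset.sum_congr rfl fun m _ => ?_
            rw [pd_comm (hginvs j k) (WithTop.coe_le_coe.mpr le_top) j m x]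
          congr 1
          · -- Q2 part
            rw [Finset.sum_comm]
            refine Finset.sum_congr rfl fun j _ => ?_
            rw [Finset.mul_sum]
            refine Finset.sum_congr rfl fun m _ => ?_
            ring
  have e6 : GG g ginv k x = -R2 - Q4 := by
    rw [hR2, hQ4]
    exact gid g ginv hgs hginvs hsymm hinv k x
  have e7 : P1 = Q3 := by
    rw [hP1, hQ3, Finset.sum_comm]
    refine Finset.sum_congr rfl fun a _ => Finset.sum_congr rfl fun b _ => ?_
    rw [curl_gam g ginv hgs hginvs hsymm hinv b a x, ginvE g ginv hsymm hinv x k b]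
  have e8 : Q1 + P2 - Q2 = 2 * Q4 := by
    have perj : ∀ j : Fin n, gam g ginv j x * ((∑ m, ginv x j m * pd m (fun y => h y k) x)
        + (∑ m, ginv x k m * pd m (fun y => h y j) x)
        - (∑ m, h x m * pd m (fun y => ginv y j k) x))
          = gam g ginv j x * (2 * ginv x j k) :=
      fun j => by rw [alpha g ginv hgs hginvs hsymm hinv h hck x j k]
    have hsum := Finset.sum_congr rfl fun j (_ : j ∈ Finset.univ) => perj j
    have L : ∑ j, gam g ginv j x * ((∑ m, ginv x j m * pd m (fun y => h y k) x)
        + (∑ m, ginv x k m * pd m (fun y => h y j) x)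
        - (∑ m, h x m * pd m (fun y => ginv y j k) x)) = Q1 + P2 - Q2 := by
      have split : ∀ j : Fin n, gam g ginv j x * ((∑ m, ginv x j m * pd m (fun y => h y k) x)
          + (∑ m, ginv x k m * pd m (fun y => h y j) x)
          - (∑ m, h x m * pd m (fun y => ginv y j k) x))
            = (∑ m, gam g ginv j x * ginv x j m * pd m (fun y => h y k) x)
              + (∑ m, gam g ginv j x * (ginv x k m * pd m (fun y => h y j) x))
              - gam g ginv j x * ∑ m, h x m * pd m (fun y => ginv y j k) x := by
        intro j
        rw [mul_sub, mul_add, Finset.mul_sum, Finset.mul_sum]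
        congr 1
        congr 1
        exact Finset.sum_congr rfl fun m _ => by ring
      calc ∑ j, gam g ginv j x * ((∑ m, ginv x j m * pd m (fun y => h y k) x)
          + (∑ m, ginv x k m * pd m (fun y => h y j) x)
          - (∑ m, h x m * pd m (fun y => ginv y j k) x))
          = ∑ j, ((∑ m, gam g ginv j x * ginv x j m * pd m (fun y => h y k) x)
              + (∑ m, gam g ginv j x * (ginv x k m * pd m (fun y => h y j) x))
              - gam g ginv j x * ∑ m, h x m * pd m (fun y => ginv y j k) x) :=
            Finset.sum_congr rfl fun j _ => split j
        _ = Q1 + P2 - Q2 := by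
            simp only [Finset.sum_add_distrib, Finset.sum_sub_distrib]
            rw [hQ1, hQ2, hP2]
            congr 1
            congr 1
            · exact Finset.sum_comm
            · exact Finset.sum_comm
    have R : ∑ j, gam g ginv j x * (2 * ginv x j k) = 2 * Q4 := by
      rw [hQ4, Finset.mul_sum]
      exact Finset.sum_congr rfl fun j _ => by ring
    rw [← L, ← R]
    exact hsum
  linarith [e1, e2, e3, e4, e5, e6, e7, e8]


include hgs hginvs hsymm hinv hh hck hdivh in
set_option maxHeartbeats 3000000 in
/-- the core case `l = 1` of the theorem -/
lemma core (w : (Fin n → ℝ) → ℝ) (hw : ContDiff ℝ 3 w) (x : Fin n → ℝ) :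
    lapB g ginv (fun y => ∑ k, h y k * pd k w y) x
      = 2 * lapB g ginv w x + ∑ k, h x k * pd k (lapB g ginv w) x := by
  have sw1 : ∀ k : Fin n, ContDiff ℝ 2 (pd k w) := fun k =>
    contDiff_pd k hw (by norm_num)
  have sw2 : ∀ j k : Fin n, ContDiff ℝ 1 (pd j (pd k w)) := fun j k =>
    contDiff_pd j (sw1 k) (by norm_num)
  have d1 : ∀ (k : Fin n) (y : Fin n → ℝ), DifferentiableAt ℝ (pd k w) y := fun k y =>
    ((sw1 k).differentiable (by norm_num)).differentiableAt
  have d2 : ∀ (j k : Fin n) (y : Fin n → ℝ), DifferentiableAt ℝ (pd j (pd k w)) y :=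
    fun j k y => ((sw2 j k).differentiable (by norm_num)).differentiableAt
  have dh : ∀ (k : Fin n) (y : Fin n → ℝ), DifferentiableAt ℝ (fun z => h z k) y :=
    fun k y => dAt (hh k) y
  have dph : ∀ (j k : Fin n) (y : Fin n → ℝ),
      DifferentiableAt ℝ (pd j (fun z => h z k)) y :=
    fun j k y => dAt (contDiff_top_pd j (hh k)) y
  have w2comm : ∀ (a b : Fin n) (y : Fin n → ℝ), pd a (pd b w) y = pd b (pd a w) y :=
    fun a b y => pd_comm hw (by norm_num) a b y
  have w3comm : ∀ i j k : Fin n, pd i (pd j (pd k w)) x = pd k (pd i (pd j w)) x := by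
    intro i j k
    have h1 : pd j (pd k w) = pd k (pd j w) := funext fun y => w2comm j k y
    rw [h1]
    exact pd_comm (sw1 j) le_rfl i k x
  -- expansion of the first derivative of η
  have E1 : ∀ (m : Fin n) (y : Fin n → ℝ),
      pd m (fun z => ∑ k, h z k * pd k w z) y
        = ∑ k, (pd m (fun z => h z k) y * pd k w y + h y k * pd m (pd k w) y) := by
    intro m y
    rw [pd_sum m (fun k _ => (dh k y).fun_mul (d1 k y))]
    exact Finset.sum_congr rfl fun k _ => pd_mul m (dh k y) (d1 k y)
  -- expansion of the second derivative of η
  have E2 : ∀ i j : Fin n,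
      pd i (pd j (fun z => ∑ k, h z k * pd k w z)) x
        = ∑ k, (pd i (pd j (fun z => h z k)) x * pd k w x
            + pd j (fun z => h z k) x * pd i (pd k w) x
            + pd i (fun z => h z k) x * pd j (pd k w) x
            + h x k * pd i (pd j (pd k w)) x) := by
    intro i j
    rw [pd_congr (fun y => E1 j y) i]
    rw [pd_sum i (fun k _ => (((dph j k x).fun_mul (d1 k x)).fun_add ((dh k x).fun_mul (d2 j k x))))]
    refine Finset.sum_congr rfl fun k _ => ?_
    rw [pd_add i ((dph j k x).fun_mul (d1 k x)) ((dh k x).fun_mul (d2 j k x))]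
    rw [pd_mul i (dph j k x) (d1 k x), pd_mul i (dh k x) (d2 j k x)]
    ring
  -- expansion of the derivative of Δw
  have E3 : ∀ m : Fin n, pd m (lapB g ginv w) x
      = (∑ i, ∑ j, (pd m (fun y => ginv y i j) x * pd i (pd j w) x
          + ginv x i j * pd m (pd i (pd j w)) x))
        - ∑ k, (pd m (GG g ginv k) x * pd k w x + GG g ginv k x * pd m (pd k w) x) := by
    intro m
    have hfun : lapB g ginv w = fun y => (∑ i, ∑ j, ginv y i j * pd i (pd j w) y)
        - ∑ k, GG g ginv k y * pd k w y := funext fun y => lapB_eq g ginv w y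
    rw [pd_congr (fun y => congrFun hfun y) m]
    rw [pd_sub m (DifferentiableAt.fun_sum fun i _ => DifferentiableAt.fun_sum fun j _ =>
        (dAt (hginvs i j) x).fun_mul (d2 i j x))
      (DifferentiableAt.fun_sum fun k _ =>
        (dAt (GG_contDiff g ginv hgs hginvs k) x).fun_mul (d1 k x))]
    congr 1
    · rw [pd_sum m (fun i _ => DifferentiableAt.fun_sum fun j _ =>
        (dAt (hginvs i j) x).fun_mul (d2 i j x))]
      refine Finset.sum_congr rfl fun i _ => ?_
      rw [pd_sum m (fun j _ => (dAt (hginvs i j) x).fun_mul (d2 i j x))]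
      exact Finset.sum_congr rfl fun j _ => pd_mul m (dAt (hginvs i j) x) (d2 i j x)
    · rw [pd_sum m (fun k _ => (dAt (GG_contDiff g ginv hgs hginvs k) x).fun_mul (d1 k x))]
      exact Finset.sum_congr rfl fun k _ =>
        pd_mul m (dAt (GG_contDiff g ginv hgs hginvs k) x) (d1 k x)
  -- canonical atoms
  set L1 := ∑ i, ∑ j, ∑ k, ginv x i j * (pd i (pd j (fun z => h z k)) x * pd k w x) with hL1
  set L2 := ∑ i, ∑ j, ∑ k, ginv x i j * (pd j (fun z => h z k) x * pd i (pd k w) x) with hL2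
  set L3 := ∑ i, ∑ j, ∑ k, ginv x i j * (pd i (fun z => h z k) x * pd j (pd k w) x) with hL3
  set L4 := ∑ i, ∑ j, ∑ k, ginv x i j * (h x k * pd i (pd j (pd k w)) x) with hL4
  set L5 := ∑ m, ∑ k, GG g ginv m x * (pd m (fun z => h z k) x * pd k w x) with hL5
  set L6 := ∑ m, ∑ k, GG g ginv m x * (h x k * pd m (pd k w) x) with hL6
  set R1 := ∑ i, ∑ j, ginv x i j * pd i (pd j w) x with hR1
  set R2 := ∑ k, GG g ginv k x * pd k w x with hR2
  set M1 := ∑ m, ∑ i, ∑ j, h x m * (pd m (fun y => ginv y i j) x * pd i (pd j w) x) with hM1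
  set M2 := ∑ m, ∑ i, ∑ j, h x m * (ginv x i j * pd m (pd i (pd j w)) x) with hM2
  set M3 := ∑ m, ∑ k, h x m * (pd m (GG g ginv k) x * pd k w x) with hM3
  set M4 := ∑ m, ∑ k, h x m * (GG g ginv k x * pd m (pd k w) x) with hM4
  -- expansions of the three main quantities
  have lapeta : lapB g ginv (fun y => ∑ k, h y k * pd k w y) x
      = L1 + L2 + L3 + L4 - (L5 + L6) := by
    rw [lapB_eq g ginv _ x]
    congr 1
    · -- second-derivative block
      have : ∀ i j : Fin n, ginv x i j * pd i (pd j (fun z => ∑ k, h z k * pd k w z)) x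
          = ∑ k, (ginv x i j * (pd i (pd j (fun z => h z k)) x * pd k w x)
            + ginv x i j * (pd j (fun z => h z k) x * pd i (pd k w) x)
            + ginv x i j * (pd i (fun z => h z k) x * pd j (pd k w) x)
            + ginv x i j * (h x k * pd i (pd j (pd k w)) x)) := by
        intro i j
        rw [E2 i j, Finset.mul_sum]
        exact Finset.sum_congr rfl fun k _ => by ring
      calc ∑ i, ∑ j, ginv x i j * pd i (pd j (fun z => ∑ k, h z k * pd k w z)) x
          = ∑ i, ∑ j, ∑ k, (ginv x i j * (pd i (pd j (fun z => h z k)) x * pd k w x)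
            + ginv x i j * (pd j (fun z => h z k) x * pd i (pd k w) x)
            + ginv x i j * (pd i (fun z => h z k) x * pd j (pd k w) x)
            + ginv x i j * (h x k * pd i (pd j (pd k w)) x)) :=
            Finset.sum_congr rfl fun i _ => Finset.sum_congr rfl fun j _ => this i j
        _ = L1 + L2 + L3 + L4 := by
            rw [hL1, hL2, hL3, hL4]
            simp only [Finset.sum_add_distrib]
    · -- first-derivative block
      have : ∀ m : Fin n, GG g ginv m x * pd m (fun z => ∑ k, h z k * pd k w z) x
          = ∑ k, (GG g ginv m x * (pd m (fun z => h z k) x * pd k w x)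
            + GG g ginv m x * (h x k * pd m (pd k w) x)) := by
        intro m
        rw [E1 m x, Finset.mul_sum]
        exact Finset.sum_congr rfl fun k _ => by ring
      calc ∑ m, GG g ginv m x * pd m (fun z => ∑ k, h z k * pd k w z) x
          = ∑ m, ∑ k, (GG g ginv m x * (pd m (fun z => h z k) x * pd k w x)
            + GG g ginv m x * (h x k * pd m (pd k w) x)) :=
            Finset.sum_congr rfl fun m _ => this m
        _ = L5 + L6 := by
            rw [hL5, hL6]
            simp only [Finset.sum_add_distrib]
  have lapw : lapB g ginv w x = R1 - R2 := by
    rw [hR1, hR2]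
    exact lapB_eq g ginv w x
  have hlap : ∑ k, h x k * pd k (lapB g ginv w) x = M1 + M2 - (M3 + M4) := by
    have : ∀ m : Fin n, h x m * pd m (lapB g ginv w) x
        = ((∑ i, ∑ j, (h x m * (pd m (fun y => ginv y i j) x * pd i (pd j w) x)
            + h x m * (ginv x i j * pd m (pd i (pd j w)) x)))
          - ∑ k, (h x m * (pd m (GG g ginv k) x * pd k w x)
            + h x m * (GG g ginv k x * pd m (pd k w) x))) := by
      intro m
      rw [E3 m, mul_sub, Finset.mul_sum, Finset.mul_sum]
      congr 1
      · refine Finset.sum_congr rfl fun i _ => ?_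
        rw [Finset.mul_sum]
        refine Finset.sum_congr rfl fun j _ => ?_
        ring
      · exact Finset.sum_congr rfl fun k _ => by ring
    calc ∑ m, h x m * pd m (lapB g ginv w) x
        = ∑ m, (((∑ i, ∑ j, (h x m * (pd m (fun y => ginv y i j) x * pd i (pd j w) x)
            + h x m * (ginv x i j * pd m (pd i (pd j w)) x))))
          - ∑ k, (h x m * (pd m (GG g ginv k) x * pd k w x)
            + h x m * (GG g ginv k x * pd m (pd k w) x))) :=
          Finset.sum_congr rfl fun m _ => this m
      _ = M1 + M2 - (M3 + M4) := by
          rw [hM1, hM2, hM3, hM4]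
          simp only [Finset.sum_add_distrib, Finset.sum_sub_distrib]
  -- the four cancellation identities
  have Ia : L4 = M2 := by
    rw [hL4, hM2]
    calc ∑ i, ∑ j, ∑ k, ginv x i j * (h x k * pd i (pd j (pd k w)) x)
        = ∑ i, ∑ j, ∑ k, ginv x i j * (h x k * pd k (pd i (pd j w)) x) :=
          Finset.sum_congr rfl fun i _ => Finset.sum_congr rfl fun j _ =>
            Finset.sum_congr rfl fun k _ => by rw [w3comm i j k]
      _ = ∑ i, ∑ k, ∑ j, ginv x i j * (h x k * pd k (pd i (pd j w)) x) :=
          Finset.sum_congr rfl fun i _ => Finset.sum_comm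
      _ = ∑ k, ∑ i, ∑ j, ginv x i j * (h x k * pd k (pd i (pd j w)) x) := Finset.sum_comm
      _ = ∑ m, ∑ i, ∑ j, h x m * (ginv x i j * pd m (pd i (pd j w)) x) :=
          Finset.sum_congr rfl fun m _ => Finset.sum_congr rfl fun i _ =>
            Finset.sum_congr rfl fun j _ => by ring
  have Ib : L6 = M4 := by
    rw [hL6, hM4, Finset.sum_comm]
    refine Finset.sum_congr rfl fun a _ => Finset.sum_congr rfl fun b _ => ?_
    rw [w2comm b a x]
    ring
  have Ic : L1 - L5 + M3 + 2 * R2 = 0 := by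
    have perk : ∀ k : Fin n,
        ((∑ j, ∑ m, ginv x j m * pd j (pd m (fun y => h y k)) x)
          - (∑ m, GG g ginv m x * pd m (fun y => h y k) x)
          + (∑ m, h x m * pd m (GG g ginv k) x)
          + 2 * GG g ginv k x) * pd k w x = 0 := fun k => by
      rw [beta g ginv hgs hginvs hsymm hinv h hh hck hdivh x k, zero_mul]
    have hsum : ∑ k, ((∑ j, ∑ m, ginv x j m * pd j (pd m (fun y => h y k)) x)
          - (∑ m, GG g ginv m x * pd m (fun y => h y k) x)
          + (∑ m, h x m * pd m (GG g ginv k) x)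
          + 2 * GG g ginv k x) * pd k w x = 0 := by
      rw [Finset.sum_congr rfl fun k (_ : k ∈ Finset.univ) => perk k]
      simp
    have expand : ∑ k, ((∑ j, ∑ m, ginv x j m * pd j (pd m (fun y => h y k)) x)
          - (∑ m, GG g ginv m x * pd m (fun y => h y k) x)
          + (∑ m, h x m * pd m (GG g ginv k) x)
          + 2 * GG g ginv k x) * pd k w x
        = L1 - L5 + M3 + 2 * R2 := by
      have perk2 : ∀ k : Fin n, ((∑ j, ∑ m, ginv x j m * pd j (pd m (fun y => h y k)) x)
          - (∑ m, GG g ginv m x * pd m (fun y => h y k) x)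
          + (∑ m, h x m * pd m (GG g ginv k) x)
          + 2 * GG g ginv k x) * pd k w x
          = (∑ j, ∑ m, ginv x j m * (pd j (pd m (fun y => h y k)) x * pd k w x))
            - (∑ m, GG g ginv m x * (pd m (fun y => h y k) x * pd k w x))
            + (∑ m, h x m * (pd m (GG g ginv k) x * pd k w x))
            + 2 * (GG g ginv k x * pd k w x) := by
        intro k
        rw [add_mul, add_mul, sub_mul, Finset.sum_mul, Finset.sum_mul, Finset.sum_mul]
        have t1 : ∑ j, (∑ m, ginv x j m * pd j (pd m (fun y => h y k)) x) * pd k w x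
            = ∑ j, ∑ m, ginv x j m * (pd j (pd m (fun y => h y k)) x * pd k w x) := by
          refine Finset.sum_congr rfl fun j _ => ?_
          rw [Finset.sum_mul]
          exact Finset.sum_congr rfl fun m _ => by ring
        rw [t1]
        have t2 : ∑ m, GG g ginv m x * pd m (fun y => h y k) x * pd k w x
            = ∑ m, GG g ginv m x * (pd m (fun y => h y k) x * pd k w x) :=
          Finset.sum_congr rfl fun m _ => by ring
        rw [t2]
        have t3 : ∑ m, h x m * pd m (GG g ginv k) x * pd k w x
            = ∑ m, h x m * (pd m (GG g ginv k) x * pd k w x) :=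
          Finset.sum_congr rfl fun m _ => by ring
        rw [t3]
        ring
      rw [Finset.sum_congr rfl fun k (_ : k ∈ Finset.univ) => perk2 k]
      simp only [Finset.sum_add_distrib, Finset.sum_sub_distrib]
      rw [hL1, hL5, hM3, hR2]
      congr 1
      · congr 1
        · congr 1
          · -- ∑_k ∑_j ∑_m → ∑_i=j ∑_j=m ∑_k : move k inside
            calc ∑ k : Fin n, ∑ j, ∑ m, ginv x j m * (pd j (pd m (fun y => h y k)) x * pd k w x)
                = ∑ j, ∑ k : Fin n, ∑ m, ginv x j m * (pd j (pd m (fun y => h y k)) x * pd k w x) :=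
                  Finset.sum_comm
              _ = ∑ j, ∑ m, ∑ k, ginv x j m * (pd j (pd m (fun y => h y k)) x * pd k w x) :=
                  Finset.sum_congr rfl fun j _ => Finset.sum_comm
          · exact Finset.sum_comm
        · exact Finset.sum_comm
      · rw [Finset.mul_sum]
    rw [← expand]
    exact hsum
  have Id : L2 + L3 - M1 - 2 * R1 = 0 := by
    have perab : ∀ a b : Fin n,
        ((∑ m, ginv x a m * pd m (fun y => h y b) x)
          + (∑ m, ginv x b m * pd m (fun y => h y a) x)
          - (∑ m, h x m * pd m (fun y => ginv y a b) x)) * pd a (pd b w) x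
          = 2 * ginv x a b * pd a (pd b w) x := fun a b => by
      rw [alpha g ginv hgs hginvs hsymm hinv h hck x a b]
    -- canonical form of the alpha-weighted sum
    set P := ∑ a, ∑ b, ∑ m, ginv x a m * (pd m (fun y => h y b) x * pd a (pd b w) x) with hP
    set Pm := ∑ a, ∑ b, ∑ m, h x m * (pd m (fun y => ginv y a b) x * pd a (pd b w) x) with hPm
    have hsum : P + P - Pm = 2 * R1 := by
      have split : ∀ a b : Fin n,
          ((∑ m, ginv x a m * pd m (fun y => h y b) x)
            + (∑ m, ginv x b m * pd m (fun y => h y a) x)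
            - (∑ m, h x m * pd m (fun y => ginv y a b) x)) * pd a (pd b w) x
          = (∑ m, ginv x a m * (pd m (fun y => h y b) x * pd a (pd b w) x))
            + (∑ m, ginv x b m * (pd m (fun y => h y a) x * pd a (pd b w) x))
            - (∑ m, h x m * (pd m (fun y => ginv y a b) x * pd a (pd b w) x)) := by
        intro a b
        rw [sub_mul, add_mul, Finset.sum_mul, Finset.sum_mul, Finset.sum_mul]
        congr 1
        · congr 1
          · exact Finset.sum_congr rfl fun m _ => by ring
          · exact Finset.sum_congr rfl fun m _ => by ring
        · exact Finset.sum_congr rfl fun m _ => by ring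
      have big : ∑ a, ∑ b, (((∑ m, ginv x a m * pd m (fun y => h y b) x)
            + (∑ m, ginv x b m * pd m (fun y => h y a) x)
            - (∑ m, h x m * pd m (fun y => ginv y a b) x)) * pd a (pd b w) x)
          = ∑ a, ∑ b, (2 * ginv x a b * pd a (pd b w) x) :=
        Finset.sum_congr rfl fun a _ => Finset.sum_congr rfl fun b _ => perab a b
      have lhs_split : ∑ a, ∑ b, (((∑ m, ginv x a m * pd m (fun y => h y b) x)
            + (∑ m, ginv x b m * pd m (fun y => h y a) x)
            - (∑ m, h x m * pd m (fun y => ginv y a b) x)) * pd a (pd b w) x)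
          = P + (∑ a, ∑ b, ∑ m, ginv x b m * (pd m (fun y => h y a) x * pd a (pd b w) x)) - Pm := by
        rw [Finset.sum_congr rfl fun a (_ : a ∈ Finset.univ) =>
          Finset.sum_congr rfl fun b (_ : b ∈ Finset.univ) => split a b]
        simp only [Finset.sum_add_distrib, Finset.sum_sub_distrib]
        rw [hP, hPm]
      have swap2 : ∑ a, ∑ b, ∑ m, ginv x b m * (pd m (fun y => h y a) x * pd a (pd b w) x) = P := by
        rw [hP, Finset.sum_comm]
        refine Finset.sum_congr rfl fun a _ => Finset.sum_congr rfl fun b _ =>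
          Finset.sum_congr rfl fun m _ => ?_
        rw [w2comm b a x]
      have rhs_eq : ∑ a, ∑ b, (2 * ginv x a b * pd a (pd b w) x) = 2 * R1 := by
        rw [hR1, Finset.mul_sum]
        refine Finset.sum_congr rfl fun a _ => ?_
        rw [Finset.mul_sum]
        exact Finset.sum_congr rfl fun b _ => by ring
      rw [← rhs_eq, ← big, lhs_split, swap2]
    have hL2P : L2 = P := by
      rw [hL2, hP]
      refine Finset.sum_congr rfl fun i _ => ?_
      rw [Finset.sum_comm]
    have hL3P : L3 = P := by
      rw [hL3, hP]
      calc ∑ i, ∑ j, ∑ k, ginv x i j * (pd i (fun z => h z k) x * pd j (pd k w) x)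
          = ∑ j, ∑ i, ∑ k, ginv x i j * (pd i (fun z => h z k) x * pd j (pd k w) x) :=
            Finset.sum_comm
        _ = ∑ j, ∑ k, ∑ i, ginv x i j * (pd i (fun z => h z k) x * pd j (pd k w) x) :=
            Finset.sum_congr rfl fun j _ => Finset.sum_comm
        _ = P := by
            rw [hP]
            refine Finset.sum_congr rfl fun a _ => Finset.sum_congr rfl fun b _ =>
              Finset.sum_congr rfl fun m _ => ?_
            rw [ginvE g ginv hsymm hinv x m a]
    have hM1Pm : M1 = Pm := by
      rw [hM1, hPm]
      calc ∑ m, ∑ i, ∑ j, h x m * (pd m (fun y => ginv y i j) x * pd i (pd j w) x)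
          = ∑ i, ∑ m, ∑ j, h x m * (pd m (fun y => ginv y i j) x * pd i (pd j w) x) :=
            Finset.sum_comm
        _ = ∑ i, ∑ j, ∑ m, h x m * (pd m (fun y => ginv y i j) x * pd i (pd j w) x) :=
            Finset.sum_congr rfl fun i _ => Finset.sum_comm
    rw [hL2P, hL3P, hM1Pm]
    linarith [hsum]
  rw [lapeta, lapw, hlap]
  linarith [Ia, Ib, Ic, Id]

include hgs hginvs in
lemma lapB_contDiff {m : ℕ} {f : (Fin n → ℝ) → ℝ} (hf : ContDiff ℝ (m + 2 : ℕ) f) :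
    ContDiff ℝ (m : ℕ) (lapB g ginv f) := by
  have h1 : ∀ j : Fin n, ContDiff ℝ ((m + 1 : ℕ) : WithTop ℕ∞) (pd j f) := fun j =>
    contDiff_pd j hf (by push_cast; rw [add_assoc, one_add_one_eq_two])
  have h2 : ∀ i j : Fin n, ContDiff ℝ (m : ℕ) (pd i (pd j f)) := fun i j =>
    contDiff_pd i (h1 j) (by push_cast; norm_num)
  have h3 : ∀ k : Fin n, ContDiff ℝ (m : ℕ) (pd k f) := fun k =>
    (h1 k).of_le (by exact_mod_cast Nat.le_succ m)
  unfold lapB hessg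
  exact ContDiff.sum fun i _ => ContDiff.sum fun j _ =>
    ((hginvs i j).of_le (by exact_mod_cast le_top)).mul ((h2 i j).sub (ContDiff.sum fun k _ =>
      ((christoffel_contDiff g ginv hgs hginvs k i j).of_le (by exact_mod_cast le_top)).mul (h3 k)))

include hgs hginvs in
lemma iter_contDiff (m : ℕ) : ∀ (l : ℕ) (v : (Fin n → ℝ) → ℝ),
    ContDiff ℝ (m + 2 * l : ℕ) v → ContDiff ℝ (m : ℕ) ((lapB g ginv)^[l] v) := by
  intro l
  induction l with
  | zero => intro v hv; simpa using hv
  | succ l IH =>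
    intro v hv
    rw [Function.iterate_succ_apply]
    refine IH (lapB g ginv v) (lapB_contDiff g ginv hgs hginvs ?_)
    have e : m + 2 * (l + 1) = m + 2 * l + 2 := by ring
    rwa [e] at hv

include hgs hginvs in
lemma lapB_add {f f' : (Fin n → ℝ) → ℝ} (hf : ContDiff ℝ (2:ℕ) f)
    (hf' : ContDiff ℝ (2:ℕ) f') (x : Fin n → ℝ) :
    lapB g ginv (fun y => f y + f' y) x = lapB g ginv f x + lapB g ginv f' x := by
  have df : ∀ y, DifferentiableAt ℝ f y := fun y =>
    (hf.differentiable (by norm_num)).differentiableAt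
  have df' : ∀ y, DifferentiableAt ℝ f' y := fun y =>
    (hf'.differentiable (by norm_num)).differentiableAt
  have dpf : ∀ (j : Fin n) (y : Fin n → ℝ), DifferentiableAt ℝ (pd j f) y := fun j y =>
    ((contDiff_pd (m := ((1:ℕ) : WithTop ℕ∞)) j hf (by norm_num)).differentiable
      (by norm_num)).differentiableAt
  have dpf' : ∀ (j : Fin n) (y : Fin n → ℝ), DifferentiableAt ℝ (pd j f') y := fun j y =>
    ((contDiff_pd (m := ((1:ℕ) : WithTop ℕ∞)) j hf' (by norm_num)).differentiable
      (by norm_num)).differentiableAt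
  have hpd : ∀ j : Fin n, pd j (fun y => f y + f' y) = fun y => pd j f y + pd j f' y :=
    fun j => funext fun y => pd_add j (df y) (df' y)
  have hk : ∀ (k : Fin n), pd k (fun y => f y + f' y) x = pd k f x + pd k f' x :=
    fun k => pd_add k (df x) (df' x)
  unfold lapB hessg
  rw [← Finset.sum_add_distrib]
  refine Finset.sum_congr rfl fun i _ => ?_
  rw [← Finset.sum_add_distrib]
  refine Finset.sum_congr rfl fun j _ => ?_
  rw [hpd j, pd_add i (dpf j x) (dpf' j x)]
  simp only [hk]
  simp only [mul_add, Finset.sum_add_distrib]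
  ring

include hgs hginvs in
lemma lapB_const_mul {f : (Fin n → ℝ) → ℝ} (c : ℝ) (hf : ContDiff ℝ (2:ℕ) f)
    (x : Fin n → ℝ) :
    lapB g ginv (fun y => c * f y) x = c * lapB g ginv f x := by
  have df : ∀ y, DifferentiableAt ℝ f y := fun y =>
    (hf.differentiable (by norm_num)).differentiableAt
  have dpf : ∀ (j : Fin n) (y : Fin n → ℝ), DifferentiableAt ℝ (pd j f) y := fun j y =>
    ((contDiff_pd (m := ((1:ℕ) : WithTop ℕ∞)) j hf (by norm_num)).differentiable
      (by norm_num)).differentiableAt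
  have hpd : ∀ j : Fin n, pd j (fun y => c * f y) = fun y => c * pd j f y :=
    fun j => funext fun y => pd_const_mul j c (df y)
  have hk : ∀ (k : Fin n), pd k (fun y => c * f y) x = c * pd k f x :=
    fun k => pd_const_mul k c (df x)
  unfold lapB hessg
  rw [Finset.mul_sum]
  refine Finset.sum_congr rfl fun i _ => ?_
  rw [Finset.mul_sum]
  refine Finset.sum_congr rfl fun j _ => ?_
  rw [hpd j, pd_const_mul i c (dpf j x)]
  simp only [hk]
  have : ∑ k, christoffel g ginv k i j x * (c * pd k f x)
      = c * ∑ k, christoffel g ginv k i j x * pd k f x := by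
    rw [Finset.mul_sum]
    exact Finset.sum_congr rfl fun k _ => by ring
  rw [this]
  ring

end homo

end geom

end Homo

/-- for a homothetic field `h` (`∇^i h^k + ∇^k h^i = 2 g^{ik}`, `div h = n`),
`Δ_g^l ⟨h, ∇v⟩ = 2l Δ_g^l v + h^k ∇_k(Δ_g^l v)`. -/
theorem iterated_laplacian_of_homothety_pairing (n : ℕ)
    (g ginv : (Fin n → ℝ) → Matrix (Fin n) (Fin n) ℝ)
    (hgs : ∀ i j, ContDiff ℝ (⊤ : ℕ∞) fun x => g x i j)
    (hginvs : ∀ i j, ContDiff ℝ (⊤ : ℕ∞) fun x => ginv x i j)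
    (hsymm : ∀ x, (g x).IsSymm) (hpos : ∀ x, (g x).PosDef)
    (hinv : ∀ x, g x * ginv x = 1)
    (h : (Fin n → ℝ) → Fin n → ℝ) (hh : ∀ k, ContDiff ℝ (⊤ : ℕ∞) fun x => h x k)
    (hck : ∀ x i k, covDVecUp g ginv h i k x + covDVecUp g ginv h k i x = 2 * ginv x i k)
    (hdivh : ∀ x, ∑ i, covDVec g ginv h i i x = (n : ℝ)) :
    ∀ (l : ℕ) (v : (Fin n → ℝ) → ℝ), ContDiff ℝ (2 * l + 1 : ℕ) v →
      ∀ x : Fin n → ℝ,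
        (lapB g ginv)^[l] (fun y => ∑ k, h y k * pd k v y) x
          = 2 * (l : ℝ) * ((lapB g ginv)^[l] v x)
            + ∑ k, h x k * pd k ((lapB g ginv)^[l] v) x := by
  intro l
  induction l with
  | zero =>
    intro v hv x
    simp
  | succ l IH =>
    intro v hv x
    have hv' : ContDiff ℝ (2 * l + 1 : ℕ) v :=
      hv.of_le (by exact_mod_cast (by omega : 2 * l + 1 ≤ 2 * (l + 1) + 1))
    have hv3 : ContDiff ℝ (3 + 2 * l : ℕ) v := by
      have e : 2 * (l + 1) + 1 = 3 + 2 * l := by ring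
      rwa [e] at hv
    have hu3 : ContDiff ℝ ((3:ℕ) : WithTop ℕ∞) ((lapB g ginv)^[l] v) :=
      Homo.iter_contDiff g ginv hgs hginvs 3 l v hv3
    have hIH : (lapB g ginv)^[l] (fun y => ∑ k, h y k * pd k v y)
        = fun y => 2 * (l : ℝ) * ((lapB g ginv)^[l] v y)
            + ∑ k, h y k * pd k ((lapB g ginv)^[l] v) y :=
      funext fun y => IH v hv' y
    rw [Function.iterate_succ_apply', hIH]
    have hc2 : ContDiff ℝ ((2:ℕ) : WithTop ℕ∞)
        (fun y => 2 * (l : ℝ) * ((lapB g ginv)^[l] v y)) :=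
      contDiff_const.mul (hu3.of_le (by exact_mod_cast (by omega : 2 ≤ 3)))
    have hS2 : ContDiff ℝ ((2:ℕ) : WithTop ℕ∞)
        (fun y => ∑ k, h y k * pd k ((lapB g ginv)^[l] v) y) :=
      ContDiff.sum fun k _ => ((hh k).of_le (WithTop.coe_le_coe.mpr le_top)).mul
        (Homo.contDiff_pd k hu3 (by norm_num))
    rw [Homo.lapB_add g ginv hgs hginvs hc2 hS2 x]
    rw [Homo.lapB_const_mul g ginv hgs hginvs (2 * (l:ℝ))
      (hu3.of_le (by exact_mod_cast (by omega : 2 ≤ 3))) x]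
    rw [Homo.core g ginv hgs hginvs hsymm hinv h hh hck hdivh ((lapB g ginv)^[l] v) hu3 x]
    rw [Function.iterate_succ_apply']
    push_cast
    ring
end
end

section
/- Let u, v ∈ C^{4m} and let η = ⟨h, ∇v⟩, φ = ⟨h, ∇u⟩ for a smooth vector field h on a Riemannian manifold (M, g). Define w^i = −Σ_{s=0}^{m−1} Δ_g^s η ∇^i(Δ_g^{2m−1−s} u) + Σ_{s=0}^{m−1} ∇^i(Δ_g^s η) Δ_g^{2m−1−s} u − Σ_{s=0}^{m−1} Δ_g^s φ ∇^i(Δ_g^{2m−1−s} v) + Σ_{s=0}^{m−1} ∇^i(Δ_g^s φ) Δ_g^{2m−1−s} v. Then pointwise: (Δ_g^m u)(Δ_g^m η) + (Δ_g^m v)(Δ_g^m φ) = (Δ_g^{2m} u)·η + (Δ_g^{2m} v)·φ + ∇_i w^i. -/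
open MeasureTheory
open scoped BigOperators

noncomputable section

/-! ### Auxiliary lemmas -/

section Aux

open Matrix

variable {n : ℕ} {g ginv : (Fin n → ℝ) → Matrix (Fin n) (Fin n) ℝ}

lemma pd_contDiff {k : WithTop ℕ∞} {f : (Fin n → ℝ) → ℝ} (i : Fin n)
    (hf : ContDiff ℝ (k + 1) f) : ContDiff ℝ k (pd i f) :=
  (hf.fderiv_right le_rfl).clm_apply contDiff_const

lemma pd_contDiff_nat {k : ℕ} {f : (Fin n → ℝ) → ℝ} (i : Fin n)
    (hf : ContDiff ℝ ((k + 1 : ℕ)) f) : ContDiff ℝ (k : ℕ) (pd i f) := by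
  apply pd_contDiff i
  have : ((k + 1 : ℕ) : WithTop ℕ∞) = (k : WithTop ℕ∞) + 1 := by push_cast; ring
  rwa [this] at hf

lemma pd_contDiff_top {f : (Fin n → ℝ) → ℝ} (i : Fin n)
    (hf : ContDiff ℝ (⊤ : ℕ∞) f) : ContDiff ℝ (⊤ : ℕ∞) (pd i f) := by
  apply pd_contDiff i
  exact hf.of_le (by simp)

lemma cd_mono {k l : ℕ} (hkl : k ≤ l) {f : (Fin n → ℝ) → ℝ}
    (hf : ContDiff ℝ (l : ℕ) f) : ContDiff ℝ (k : ℕ) f :=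
  hf.of_le (by exact_mod_cast hkl)

lemma cd2_diff {f : (Fin n → ℝ) → ℝ} (hf : ContDiff ℝ (2 : ℕ) f) :
    Differentiable ℝ f :=
  hf.differentiable (by norm_num)

lemma cd2_pd_diff {f : (Fin n → ℝ) → ℝ} (hf : ContDiff ℝ (2 : ℕ) f) (j : Fin n) :
    Differentiable ℝ (pd j f) := by
  have h1 : ContDiff ℝ ((1 + 1 : ℕ)) f := by rwa [show ((1:ℕ) + 1) = 2 from rfl]
  exact (pd_contDiff_nat j h1).differentiable (by norm_num)

lemma pd_congr {f h : (Fin n → ℝ) → ℝ} (i : Fin n) (he : ∀ x, f x = h x) :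
    pd i f = pd i h := by
  have : f = h := funext he
  rw [this]

lemma pd_add {f h : (Fin n → ℝ) → ℝ} (i : Fin n) (x : Fin n → ℝ)
    (hf : DifferentiableAt ℝ f x) (hh : DifferentiableAt ℝ h x) :
    pd i (fun y => f y + h y) x = pd i f x + pd i h x := by
  simp [pd, fderiv_fun_add hf hh]

lemma pd_neg {f : (Fin n → ℝ) → ℝ} (i : Fin n) (x : Fin n → ℝ) :
    pd i (fun y => -f y) x = - pd i f x := by
  simp [pd, fderiv_neg]

lemma pd_mul {f h : (Fin n → ℝ) → ℝ} (i : Fin n) (x : Fin n → ℝ)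
    (hf : DifferentiableAt ℝ f x) (hh : DifferentiableAt ℝ h x) :
    pd i (fun y => f y * h y) x = pd i f x * h x + f x * pd i h x := by
  simp [pd, fderiv_fun_mul hf hh]; ring

lemma pd_sum {ι : Type*} (s : Finset ι) {F : ι → (Fin n → ℝ) → ℝ} (i : Fin n) (x : Fin n → ℝ)
    (hF : ∀ j ∈ s, DifferentiableAt ℝ (F j) x) :
    pd i (fun y => ∑ j ∈ s, F j y) x = ∑ j ∈ s, pd i (F j) x := by
  unfold pd; rw [fderiv_fun_sum hF]; simp

/-! ### Four-index sum machinery -/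

def S4 {n : ℕ} (f : Fin n → Fin n → Fin n → Fin n → ℝ) : ℝ :=
  ∑ a, ∑ b, ∑ c, ∑ d, f a b c d

lemma S4_congr {f h : Fin n → Fin n → Fin n → Fin n → ℝ}
    (he : ∀ a b c d, f a b c d = h a b c d) : S4 f = S4 h := by
  unfold S4; exact Finset.sum_congr rfl fun a _ => Finset.sum_congr rfl fun b _ =>
    Finset.sum_congr rfl fun c _ => Finset.sum_congr rfl fun d _ => he a b c d

lemma S4_flat (f : Fin n → Fin n → Fin n → Fin n → ℝ) :
    S4 f = ∑ p : Fin n × Fin n × Fin n × Fin n, f p.1 p.2.1 p.2.2.1 p.2.2.2 := by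
  simp [S4, Fintype.sum_prod_type]

lemma S4_perm (f : Fin n → Fin n → Fin n → Fin n → ℝ)
    (σ : (Fin n × Fin n × Fin n × Fin n) ≃ (Fin n × Fin n × Fin n × Fin n)) :
    S4 f = S4 (fun a b c d => f (σ (a,b,c,d)).1 (σ (a,b,c,d)).2.1 (σ (a,b,c,d)).2.2.1
      (σ (a,b,c,d)).2.2.2) := by
  rw [S4_flat, S4_flat, ← Equiv.sum_comp σ (fun p => f p.1 p.2.1 p.2.2.1 p.2.2.2)]

lemma S4_reindex {f h : Fin n → Fin n → Fin n → Fin n → ℝ}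
    (σ : (Fin n × Fin n × Fin n × Fin n) ≃ (Fin n × Fin n × Fin n × Fin n))
    (he : ∀ a b c d, f (σ (a,b,c,d)).1 (σ (a,b,c,d)).2.1 (σ (a,b,c,d)).2.2.1
      (σ (a,b,c,d)).2.2.2 = h a b c d) : S4 f = S4 h :=
  (S4_perm f σ).trans (S4_congr he)

lemma S4_lin (f h k : Fin n → Fin n → Fin n → Fin n → ℝ) :
    S4 (fun a b c d => (1/2) * f a b c d + (1/2) * h a b c d - (1/2) * k a b c d)
      = (1/2) * S4 f + (1/2) * S4 h - (1/2) * S4 k := by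
  simp only [S4, Finset.sum_add_distrib, Finset.sum_sub_distrib, ← Finset.mul_sum]

lemma S4_neg (f : Fin n → Fin n → Fin n → Fin n → ℝ) :
    S4 (fun a b c d => -(f a b c d)) = - S4 f := by
  simp only [S4, ← Finset.sum_neg_distrib]

lemma key_alg (Gi : Fin n → Fin n → ℝ) (D : Fin n → Fin n → Fin n → ℝ) (P : Fin n → ℝ)
    (hGi : ∀ a b, Gi a b = Gi b a) (hD : ∀ i a b, D i a b = D i b a) :
    (∑ i, ∑ j, (-∑ c, ∑ d, Gi i c * D i c d * Gi d j) * P j)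
    + (∑ i, ∑ m', ((1/2) * ∑ l, Gi i l * (D i l m' + D m' l i - D l i m')) * (∑ j, Gi m' j * P j))
    + (∑ i, ∑ j, Gi i j * ∑ k, ((1/2) * ∑ l, Gi k l * (D i l j + D j l i - D l i j)) * P k) = 0 := by
  have h1 : (∑ i, ∑ j, (-∑ c, ∑ d, Gi i c * D i c d * Gi d j) * P j)
      = S4 (fun a b c d => -(Gi a c * D a c d * Gi d b * P b)) := by
    unfold S4
    simp only [neg_mul, Finset.sum_mul, Finset.sum_neg_distrib]
  have h2 : (∑ i, ∑ m', ((1/2) * ∑ l, Gi i l * (D i l m' + D m' l i - D l i m')) * (∑ j, Gi m' j * P j))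
      = S4 (fun a b c d => (1/2) * (Gi a c * (D a c b + D b c a - D c a b)) * (Gi b d * P d)) := by
    unfold S4
    simp only [Finset.mul_sum, Finset.sum_mul]
    exact Finset.sum_congr rfl fun a _ => Finset.sum_congr rfl fun b _ => Finset.sum_comm
  have h3 : (∑ i, ∑ j, Gi i j * ∑ k, ((1/2) * ∑ l, Gi k l * (D i l j + D j l i - D l i j)) * P k)
      = S4 (fun a b c d => Gi a b * ((1/2) * (Gi c d * (D a d b + D b d a - D d a b)) * P c)) := by
    unfold S4
    simp only [Finset.mul_sum, Finset.sum_mul]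
  rw [h1, h2, h3]
  have e1 : S4 (fun a b c d => -(Gi a c * D a c d * Gi d b * P b))
      = - S4 (fun a b c d => Gi a b * D a b c * Gi c d * P d) := by
    rw [← S4_neg]
    exact S4_reindex ⟨fun p => (p.1, p.2.2.2, p.2.1, p.2.2.1),
      fun p => (p.1, p.2.2.1, p.2.2.2, p.2.1), fun ⟨a,b,c,d⟩ => rfl, fun ⟨a,b,c,d⟩ => rfl⟩
      fun a b c d => by dsimp only [Equiv.coe_fn_mk]
  have e2 : S4 (fun a b c d => (1/2) * (Gi a c * (D a c b + D b c a - D c a b)) * (Gi b d * P d))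
      = (1/2) * S4 (fun a b c d => Gi a c * D a c b * Gi b d * P d)
        + (1/2) * S4 (fun a b c d => Gi a c * D b c a * Gi b d * P d)
        - (1/2) * S4 (fun a b c d => Gi a c * D c a b * Gi b d * P d) := by
    rw [← S4_lin]
    exact S4_congr fun a b c d => by ring
  have e3 : S4 (fun a b c d => Gi a b * ((1/2) * (Gi c d * (D a d b + D b d a - D d a b)) * P c))
      = (1/2) * S4 (fun a b c d => Gi a b * Gi c d * D a d b * P c)
        + (1/2) * S4 (fun a b c d => Gi a b * Gi c d * D b d a * P c)
        - (1/2) * S4 (fun a b c d => Gi a b * Gi c d * D d a b * P c) := by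
    rw [← S4_lin]
    exact S4_congr fun a b c d => by ring
  have eC2 : S4 (fun a b c d => Gi a c * D c a b * Gi b d * P d)
      = S4 (fun a b c d => Gi a c * D a c b * Gi b d * P d) := by
    refine S4_reindex ⟨fun p => (p.2.2.1, p.2.1, p.1, p.2.2.2),
      fun p => (p.2.2.1, p.2.1, p.1, p.2.2.2), fun ⟨a,b,c,d⟩ => rfl, fun ⟨a,b,c,d⟩ => rfl⟩
      fun a b c d => ?_
    dsimp only [Equiv.coe_fn_mk]
    rw [hGi c a]
  have eB3 : S4 (fun a b c d => Gi a b * Gi c d * D b d a * P c)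
      = S4 (fun a b c d => Gi a b * Gi c d * D a d b * P c) := by
    refine S4_reindex ⟨fun p => (p.2.1, p.1, p.2.2.1, p.2.2.2),
      fun p => (p.2.1, p.1, p.2.2.1, p.2.2.2), fun ⟨a,b,c,d⟩ => rfl, fun ⟨a,b,c,d⟩ => rfl⟩
      fun a b c d => ?_
    dsimp only [Equiv.coe_fn_mk]
    rw [hGi b a]
  have eA3 : S4 (fun a b c d => Gi a b * Gi c d * D a d b * P c)
      = S4 (fun a b c d => Gi a b * D a b c * Gi c d * P d) := by
    refine S4_reindex ⟨fun p => (p.1, p.2.1, p.2.2.2, p.2.2.1),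
      fun p => (p.1, p.2.1, p.2.2.2, p.2.2.1), fun ⟨a,b,c,d⟩ => rfl, fun ⟨a,b,c,d⟩ => rfl⟩
      fun a b c d => ?_
    dsimp only [Equiv.coe_fn_mk]
    rw [hGi d c, hD a c b]; ring
  have eC3 : S4 (fun a b c d => Gi a b * Gi c d * D d a b * P c)
      = S4 (fun a b c d => Gi a c * D b c a * Gi b d * P d) := by
    refine S4_reindex ⟨fun p => (p.2.2.1, p.1, p.2.2.2, p.2.1),
      fun p => (p.2.1, p.2.2.2, p.1, p.2.2.1), fun ⟨a,b,c,d⟩ => rfl, fun ⟨a,b,c,d⟩ => rfl⟩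
      fun a b c d => ?_
    dsimp only [Equiv.coe_fn_mk]
    rw [hGi c a, hGi d b]; ring
  rw [e1, e2, e3, eC2, eB3, eA3, eC3]
  ring

/-! ### Metric lemmas -/

lemma ginv_mul_g (hinv : ∀ x, g x * ginv x = 1) (x : Fin n → ℝ) : ginv x * g x = 1 :=
  mul_eq_one_comm.mp (hinv x)

lemma ginv_symm (hsymm : ∀ x, (g x).IsSymm) (hinv : ∀ x, g x * ginv x = 1)
    (x : Fin n → ℝ) (a b : Fin n) : ginv x a b = ginv x b a := by
  have h1 : (ginv x)ᵀ * g x = 1 := by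
    rw [← (hsymm x), ← Matrix.transpose_mul, hinv x, Matrix.transpose_one]
  have h2 : (ginv x)ᵀ = ginv x := by
    calc (ginv x)ᵀ = (ginv x)ᵀ * (g x * ginv x) := by rw [hinv x, mul_one]
    _ = ((ginv x)ᵀ * g x) * ginv x := by rw [mul_assoc]
    _ = ginv x := by rw [h1, one_mul]
  conv_rhs => rw [← h2]
  rfl

lemma g_symm_apply (hsymm : ∀ x, (g x).IsSymm) (y : Fin n → ℝ) (a b : Fin n) :
    g y a b = g y b a := by
  have := hsymm y
  rw [Matrix.IsSymm] at this
  conv_lhs => rw [← this]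
  rfl

lemma entry_diff {A : (Fin n → ℝ) → Matrix (Fin n) (Fin n) ℝ}
    (hA : ∀ i j, ContDiff ℝ (⊤ : ℕ∞) fun x => A x i j) (a b : Fin n) (x : Fin n → ℝ) :
    DifferentiableAt ℝ (fun y => A y a b) x :=
  ((hA a b).differentiable (by simp)).differentiableAt

lemma pd_ginv (hgs : ∀ i j, ContDiff ℝ (⊤ : ℕ∞) fun x => g x i j)
    (hginvs : ∀ i j, ContDiff ℝ (⊤ : ℕ∞) fun x => ginv x i j)
    (hinv : ∀ x, g x * ginv x = 1) (i a b : Fin n) (x : Fin n → ℝ) :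
    pd i (fun y => ginv y a b) x
      = -∑ c, ∑ d, ginv x a c * pd i (fun y => g y c d) x * ginv x d b := by
  have hE : ∀ e : Fin n, (∑ c, pd i (fun y => g y e c) x * ginv x c b)
      + ∑ c, g x e c * pd i (fun y => ginv y c b) x = 0 := by
    intro e
    have hconst : (fun y : Fin n → ℝ => ∑ c, g y e c * ginv y c b)
        = fun _ => (1 : Matrix (Fin n) (Fin n) ℝ) e b := by
      funext y
      rw [← Matrix.mul_apply, hinv y]
    have h0 : pd i (fun y => ∑ c, g y e c * ginv y c b) x = 0 := by
      rw [hconst]; simp [pd]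
    rw [pd_sum Finset.univ i x (fun c _ =>
      (entry_diff hgs e c x).fun_mul (entry_diff hginvs c b x))] at h0
    calc (∑ c, pd i (fun y => g y e c) x * ginv x c b)
        + ∑ c, g x e c * pd i (fun y => ginv y c b) x
        = ∑ c, (pd i (fun y => g y e c) x * ginv x c b
            + g x e c * pd i (fun y => ginv y c b) x) := by
          rw [Finset.sum_add_distrib]
      _ = ∑ c, pd i (fun y => (fun z => g z e c) y * (fun z => ginv z c b) y) x := by
          refine Finset.sum_congr rfl fun c _ => ?_
          rw [pd_mul i x (entry_diff hgs e c x) (entry_diff hginvs c b x)]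
      _ = 0 := h0
  have hinv' := ginv_mul_g hinv x
  have hdelta : ∀ c, (∑ e, ginv x a e * g x e c) = if a = c then 1 else 0 := by
    intro c
    rw [← Matrix.mul_apply, hinv']
    simp [Matrix.one_apply]
  have key : ∑ e, ginv x a e * ((∑ c, pd i (fun y => g y e c) x * ginv x c b)
      + ∑ c, g x e c * pd i (fun y => ginv y c b) x) = 0 := by
    simp only [hE, mul_zero, Finset.sum_const_zero]
  have expand : ∑ e, ginv x a e * ((∑ c, pd i (fun y => g y e c) x * ginv x c b)
      + ∑ c, g x e c * pd i (fun y => ginv y c b) x)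
      = (∑ e, ∑ c, ginv x a e * pd i (fun y => g y e c) x * ginv x c b)
        + pd i (fun y => ginv y a b) x := by
    simp only [mul_add, Finset.sum_add_distrib]
    congr 1
    · refine Finset.sum_congr rfl fun e _ => ?_
      rw [Finset.mul_sum]
      exact Finset.sum_congr rfl fun c _ => by ring
    · have hcomm : ∑ e, ginv x a e * ∑ c, g x e c * pd i (fun y => ginv y c b) x
          = ∑ c, (∑ e, ginv x a e * g x e c) * pd i (fun y => ginv y c b) x := by
        simp only [Finset.mul_sum, Finset.sum_mul]
        rw [Finset.sum_comm]
        exact Finset.sum_congr rfl fun c _ => Finset.sum_congr rfl fun e _ => by ring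
      rw [hcomm]
      simp only [hdelta]
      simp [Finset.sum_ite_eq, ite_mul]
  rw [expand] at key
  linarith [key]

/-! ### Regularity of `lapB` iterates -/

lemma christoffel_contDiff (hgs : ∀ i j, ContDiff ℝ (⊤ : ℕ∞) fun x => g x i j)
    (hginvs : ∀ i j, ContDiff ℝ (⊤ : ℕ∞) fun x => ginv x i j) (k i j : Fin n) :
    ContDiff ℝ (⊤ : ℕ∞) (christoffel g ginv k i j) := by
  unfold christoffel
  exact contDiff_const.mul <| ContDiff.sum fun l _ => (hginvs k l).mul
    (((pd_contDiff_top i (hgs l j)).add (pd_contDiff_top j (hgs l i))).sub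
      (pd_contDiff_top l (hgs i j)))

lemma lapB_contDiff {k : ℕ} (hgs : ∀ i j, ContDiff ℝ (⊤ : ℕ∞) fun x => g x i j)
    (hginvs : ∀ i j, ContDiff ℝ (⊤ : ℕ∞) fun x => ginv x i j)
    {f : (Fin n → ℝ) → ℝ} (hf : ContDiff ℝ ((k + 2 : ℕ)) f) :
    ContDiff ℝ (k : ℕ) (lapB g ginv f) := by
  have hpd : ∀ j, ContDiff ℝ ((k + 1 : ℕ)) (pd j f) := fun j => pd_contDiff_nat j hf
  have hpd2 : ∀ i j, ContDiff ℝ (k : ℕ) (pd i (pd j f)) := fun i j =>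
    pd_contDiff_nat i (hpd j)
  have hpdk : ∀ j, ContDiff ℝ (k : ℕ) (pd j f) := fun j =>
    (hpd j).of_le (by exact_mod_cast Nat.le_succ k)
  unfold lapB hessg
  exact ContDiff.sum fun i _ => ContDiff.sum fun j _ =>
    ((hginvs i j).of_le (WithTop.coe_le_coe.mpr le_top)).mul ((hpd2 i j).sub <| ContDiff.sum fun l _ =>
      ((christoffel_contDiff hgs hginvs l i j).of_le (WithTop.coe_le_coe.mpr le_top)).mul (hpdk l))

lemma lapB_iter_contDiff {k : ℕ} (hgs : ∀ i j, ContDiff ℝ (⊤ : ℕ∞) fun x => g x i j)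
    (hginvs : ∀ i j, ContDiff ℝ (⊤ : ℕ∞) fun x => ginv x i j)
    (s : ℕ) {f : (Fin n → ℝ) → ℝ} (hf : ContDiff ℝ ((k + 2 * s : ℕ)) f) :
    ContDiff ℝ (k : ℕ) ((lapB g ginv)^[s] f) := by
  induction s generalizing f with
  | zero => simpa using hf
  | succ s ih =>
    rw [Function.iterate_succ_apply]
    apply ih
    have h2 : ContDiff ℝ (((k + 2 * s) + 2 : ℕ)) f := by
      have he : (k + 2 * s) + 2 = k + 2 * (s + 1) := by ring
      rwa [he]
    exact lapB_contDiff hgs hginvs h2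

end Aux
section Div

variable {n : ℕ} {g ginv : (Fin n → ℝ) → Matrix (Fin n) (Fin n) ℝ}

lemma div_grad (hgs : ∀ i j, ContDiff ℝ (⊤ : ℕ∞) fun x => g x i j)
    (hginvs : ∀ i j, ContDiff ℝ (⊤ : ℕ∞) fun x => ginv x i j)
    (hsymm : ∀ x, (g x).IsSymm) (hinv : ∀ x, g x * ginv x = 1)
    {F : (Fin n → ℝ) → ℝ} (hF : ContDiff ℝ (2 : ℕ) F) (x : Fin n → ℝ) :
    ∑ i, (pd i (fun y => ∑ j, ginv y i j * pd j F y) x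
      + ∑ m', christoffel g ginv i i m' x * (∑ j, ginv x m' j * pd j F x))
    = lapB g ginv F x := by
  have hGi : ∀ a b, ginv x a b = ginv x b a := ginv_symm hsymm hinv x
  have hD : ∀ (i a b : Fin n), pd i (fun y => g y a b) x = pd i (fun y => g y b a) x :=
    fun i a b => by rw [pd_congr i (fun y => g_symm_apply hsymm y a b)]
  have key := key_alg (fun a b => ginv x a b)
    (fun i a b => pd i (fun y => g y a b) x) (fun k => pd k F x) hGi hD
  have hpdF : ∀ j, Differentiable ℝ (pd j F) := cd2_pd_diff hF
  have step1 : ∑ i, (pd i (fun y => ∑ j, ginv y i j * pd j F y) x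
      + ∑ m', christoffel g ginv i i m' x * (∑ j, ginv x m' j * pd j F x))
      = (∑ i, ∑ j, (-∑ c, ∑ d, ginv x i c * pd i (fun y => g y c d) x * ginv x d j)
            * pd j F x)
        + ((∑ i, ∑ j, ginv x i j * pd i (pd j F) x)
        + (∑ i, ∑ m', christoffel g ginv i i m' x * (∑ j, ginv x m' j * pd j F x))) := by
    rw [← Finset.sum_add_distrib, ← Finset.sum_add_distrib]
    refine Finset.sum_congr rfl fun i _ => ?_
    have hA : pd i (fun y => ∑ j, ginv y i j * pd j F y) x
        = (∑ j, (-∑ c, ∑ d, ginv x i c * pd i (fun y => g y c d) x * ginv x d j)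
            * pd j F x)
          + ∑ j, ginv x i j * pd i (pd j F) x := by
      rw [pd_sum Finset.univ i x (fun j _ =>
        (entry_diff hginvs i j x).fun_mul ((hpdF j).differentiableAt)),
        ← Finset.sum_add_distrib]
      refine Finset.sum_congr rfl fun j _ => ?_
      rw [pd_mul i x (entry_diff hginvs i j x) ((hpdF j).differentiableAt),
        pd_ginv hgs hginvs hinv i i j x]
    rw [hA]
    ring
  have step2 : lapB g ginv F x
      = (∑ i, ∑ j, ginv x i j * pd i (pd j F) x)
        - ∑ i, ∑ j, ginv x i j * ∑ k, christoffel g ginv k i j x * pd k F x := by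
    unfold lapB hessg
    simp only [mul_sub, Finset.sum_sub_distrib]
  have key2 : (∑ i, ∑ j, (-∑ c, ∑ d, ginv x i c * pd i (fun y => g y c d) x * ginv x d j)
        * pd j F x)
      + (∑ i, ∑ m', christoffel g ginv i i m' x * (∑ j, ginv x m' j * pd j F x))
      + (∑ i, ∑ j, ginv x i j * ∑ k, christoffel g ginv k i j x * pd k F x) = 0 := key
  rw [step1, step2]
  linarith [key2]

lemma grad_symm (hsymm : ∀ x, (g x).IsSymm) (hinv : ∀ x, g x * ginv x = 1)
    (f F : (Fin n → ℝ) → ℝ) (x : Fin n → ℝ) :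
    ∑ i, ∑ j, ginv x i j * pd i f x * pd j F x
      = ∑ i, ∑ j, ginv x i j * pd i F x * pd j f x := by
  rw [Finset.sum_comm]
  refine Finset.sum_congr rfl fun i _ => Finset.sum_congr rfl fun j _ => ?_
  rw [ginv_symm hsymm hinv x j i]
  ring

lemma div_fgrad (hgs : ∀ i j, ContDiff ℝ (⊤ : ℕ∞) fun x => g x i j)
    (hginvs : ∀ i j, ContDiff ℝ (⊤ : ℕ∞) fun x => ginv x i j)
    (hsymm : ∀ x, (g x).IsSymm) (hinv : ∀ x, g x * ginv x = 1)
    {f F : (Fin n → ℝ) → ℝ} (hf : Differentiable ℝ f) (hF : ContDiff ℝ (2 : ℕ) F)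
    (x : Fin n → ℝ) :
    ∑ i, (pd i (fun y => f y * ∑ j, ginv y i j * pd j F y) x
      + ∑ m', christoffel g ginv i i m' x * (f x * ∑ j, ginv x m' j * pd j F x))
    = f x * lapB g ginv F x + ∑ i, ∑ j, ginv x i j * pd i f x * pd j F x := by
  have hpdF : ∀ j, Differentiable ℝ (pd j F) := cd2_pd_diff hF
  have hGdiff : ∀ i, DifferentiableAt ℝ (fun y => ∑ j, ginv y i j * pd j F y) x :=
    fun i => DifferentiableAt.fun_sum fun j _ =>
      (entry_diff hginvs i j x).fun_mul ((hpdF j).differentiableAt)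
  have step : ∑ i, (pd i (fun y => f y * ∑ j, ginv y i j * pd j F y) x
      + ∑ m', christoffel g ginv i i m' x * (f x * ∑ j, ginv x m' j * pd j F x))
      = (∑ i, pd i f x * (∑ j, ginv x i j * pd j F x))
        + f x * ∑ i, (pd i (fun y => ∑ j, ginv y i j * pd j F y) x
          + ∑ m', christoffel g ginv i i m' x * (∑ j, ginv x m' j * pd j F x)) := by
    rw [Finset.mul_sum, ← Finset.sum_add_distrib]
    refine Finset.sum_congr rfl fun i _ => ?_
    rw [pd_mul i x (hf.differentiableAt) (hGdiff i)]
    have hg : ∑ m', christoffel g ginv i i m' x * (f x * ∑ j, ginv x m' j * pd j F x)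
        = f x * ∑ m', christoffel g ginv i i m' x * (∑ j, ginv x m' j * pd j F x) := by
      rw [Finset.mul_sum]
      exact Finset.sum_congr rfl fun m' _ => by ring
    rw [hg]
    ring
  rw [step, div_grad hgs hginvs hsymm hinv hF x]
  have hgr : ∑ i, pd i f x * (∑ j, ginv x i j * pd j F x)
      = ∑ i, ∑ j, ginv x i j * pd i f x * pd j F x := by
    refine Finset.sum_congr rfl fun i _ => ?_
    rw [Finset.mul_sum]
    exact Finset.sum_congr rfl fun j _ => by ring
  rw [hgr]
  ring

lemma div_pair (hgs : ∀ i j, ContDiff ℝ (⊤ : ℕ∞) fun x => g x i j)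
    (hginvs : ∀ i j, ContDiff ℝ (⊤ : ℕ∞) fun x => ginv x i j)
    (hsymm : ∀ x, (g x).IsSymm) (hinv : ∀ x, g x * ginv x = 1)
    {f F : (Fin n → ℝ) → ℝ} (hf : ContDiff ℝ (2 : ℕ) f) (hF : ContDiff ℝ (2 : ℕ) F)
    (x : Fin n → ℝ) :
    ∑ i, (pd i (fun y => -(f y * ∑ j, ginv y i j * pd j F y)
        + (∑ j, ginv y i j * pd j f y) * F y) x
      + ∑ m', christoffel g ginv i i m' x * (-(f x * ∑ j, ginv x m' j * pd j F x)
        + (∑ j, ginv x m' j * pd j f x) * F x))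
    = lapB g ginv f x * F x - f x * lapB g ginv F x := by
  have hfd : Differentiable ℝ f := cd2_diff hf
  have hFd : Differentiable ℝ F := cd2_diff hF
  have hpdF : ∀ j, Differentiable ℝ (pd j F) := cd2_pd_diff hF
  have hpdf : ∀ j, Differentiable ℝ (pd j f) := cd2_pd_diff hf
  have hGF : ∀ i, DifferentiableAt ℝ (fun y => ∑ j, ginv y i j * pd j F y) x :=
    fun i => DifferentiableAt.fun_sum fun j _ =>
      (entry_diff hginvs i j x).fun_mul ((hpdF j).differentiableAt)
  have hGf : ∀ i, DifferentiableAt ℝ (fun y => ∑ j, ginv y i j * pd j f y) x :=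
    fun i => DifferentiableAt.fun_sum fun j _ =>
      (entry_diff hginvs i j x).fun_mul ((hpdf j).differentiableAt)
  have step : ∑ i, (pd i (fun y => -(f y * ∑ j, ginv y i j * pd j F y)
        + (∑ j, ginv y i j * pd j f y) * F y) x
      + ∑ m', christoffel g ginv i i m' x * (-(f x * ∑ j, ginv x m' j * pd j F x)
        + (∑ j, ginv x m' j * pd j f x) * F x))
      = -(∑ i, (pd i (fun y => f y * ∑ j, ginv y i j * pd j F y) x
          + ∑ m', christoffel g ginv i i m' x * (f x * ∑ j, ginv x m' j * pd j F x)))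
        + ∑ i, (pd i (fun y => F y * ∑ j, ginv y i j * pd j f y) x
          + ∑ m', christoffel g ginv i i m' x * (F x * ∑ j, ginv x m' j * pd j f x)) := by
    rw [← Finset.sum_neg_distrib, ← Finset.sum_add_distrib]
    refine Finset.sum_congr rfl fun i _ => ?_
    rw [pd_add i x (((hfd.differentiableAt).fun_mul (hGF i)).fun_neg)
        ((hGf i).fun_mul (hFd.differentiableAt)),
      show (fun y => -(f y * ∑ j, ginv y i j * pd j F y))
        = (fun y => -((fun z => f z * ∑ j, ginv z i j * pd j F z) y)) from rfl,
      pd_neg i x,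
      show (fun y => (∑ j, ginv y i j * pd j f y) * F y)
        = (fun y => F y * ∑ j, ginv y i j * pd j f y) from funext fun y => mul_comm _ _]
    have hG : ∑ m', christoffel g ginv i i m' x * (-(f x * ∑ j, ginv x m' j * pd j F x)
        + (∑ j, ginv x m' j * pd j f x) * F x)
        = -(∑ m', christoffel g ginv i i m' x * (f x * ∑ j, ginv x m' j * pd j F x))
          + ∑ m', christoffel g ginv i i m' x * (F x * ∑ j, ginv x m' j * pd j f x) := by
      rw [← Finset.sum_neg_distrib, ← Finset.sum_add_distrib]
      exact Finset.sum_congr rfl fun m' _ => by ring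
    rw [hG]
    ring
  rw [step, div_fgrad hgs hginvs hsymm hinv hfd hF x,
    div_fgrad hgs hginvs hsymm hinv hFd hf x,
    grad_symm hsymm hinv F f x]
  ring

end Div
/-- The basic vector field `-f ∇F + (∇f) F` (index `k`). -/
def VF {n : ℕ} (g ginv : (Fin n → ℝ) → Matrix (Fin n) (Fin n) ℝ)
    (f F : (Fin n → ℝ) → ℝ) (k : Fin n) (y : Fin n → ℝ) : ℝ :=
  -(f y * ∑ j, ginv y k j * pd j F y) + (∑ j, ginv y k j * pd j f y) * F y

section Main

variable {n : ℕ} {g ginv : (Fin n → ℝ) → Matrix (Fin n) (Fin n) ℝ}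

lemma VF_diffAt (hginvs : ∀ i j, ContDiff ℝ (⊤ : ℕ∞) fun x => ginv x i j)
    {f F : (Fin n → ℝ) → ℝ} (hf : ContDiff ℝ (2 : ℕ) f) (hF : ContDiff ℝ (2 : ℕ) F)
    (k : Fin n) (x : Fin n → ℝ) :
    DifferentiableAt ℝ (fun y => VF g ginv f F k y) x := by
  unfold VF
  exact ((((cd2_diff hf).differentiableAt).fun_mul (DifferentiableAt.fun_sum fun j _ =>
      (entry_diff hginvs k j x).fun_mul ((cd2_pd_diff hF j).differentiableAt))).fun_neg).fun_add
    ((DifferentiableAt.fun_sum fun j _ =>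
      (entry_diff hginvs k j x).fun_mul ((cd2_pd_diff hf j).differentiableAt)).fun_mul
      ((cd2_diff hF).differentiableAt))

lemma div_pair' (hgs : ∀ i j, ContDiff ℝ (⊤ : ℕ∞) fun x => g x i j)
    (hginvs : ∀ i j, ContDiff ℝ (⊤ : ℕ∞) fun x => ginv x i j)
    (hsymm : ∀ x, (g x).IsSymm) (hinv : ∀ x, g x * ginv x = 1)
    {f F : (Fin n → ℝ) → ℝ} (hf : ContDiff ℝ (2 : ℕ) f) (hF : ContDiff ℝ (2 : ℕ) F)
    (x : Fin n → ℝ) :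
    ∑ i, (pd i (fun y => VF g ginv f F i y) x
      + ∑ m', christoffel g ginv i i m' x * VF g ginv f F m' x)
    = lapB g ginv f x * F x - f x * lapB g ginv F x := by
  exact div_pair hgs hginvs hsymm hinv hf hF x

/-- pointwise divergence identity (Proposition 4.1) for powers of `Δ_g`. -/
theorem pointwise_divergence_identity (n m : ℕ) (hm : 1 ≤ m)
    (g ginv : (Fin n → ℝ) → Matrix (Fin n) (Fin n) ℝ)
    (hgs : ∀ i j, ContDiff ℝ (⊤ : ℕ∞) fun x => g x i j)
    (hginvs : ∀ i j, ContDiff ℝ (⊤ : ℕ∞) fun x => ginv x i j)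
    (hsymm : ∀ x, (g x).IsSymm) (hpos : ∀ x, (g x).PosDef)
    (hinv : ∀ x, g x * ginv x = 1)
    (h : (Fin n → ℝ) → Fin n → ℝ) (hh : ∀ k, ContDiff ℝ (⊤ : ℕ∞) fun x => h x k)
    (u v : (Fin n → ℝ) → ℝ)
    (hu : ContDiff ℝ (4 * m : ℕ) u) (hv : ContDiff ℝ (4 * m : ℕ) v)
    (η φ : (Fin n → ℝ) → ℝ)
    (hη : ∀ y, η y = ∑ k, h y k * pd k v y)
    (hφ : ∀ y, φ y = ∑ k, h y k * pd k u y)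
    (w : (Fin n → ℝ) → Fin n → ℝ)
    (hw : ∀ x i, w x i =
      -(∑ s ∈ Finset.range m, (lapB g ginv)^[s] η x
          * (∑ j, ginv x i j * pd j ((lapB g ginv)^[2 * m - 1 - s] u) x))
      + (∑ s ∈ Finset.range m, (∑ j, ginv x i j * pd j ((lapB g ginv)^[s] η) x)
          * (lapB g ginv)^[2 * m - 1 - s] u x)
      - (∑ s ∈ Finset.range m, (lapB g ginv)^[s] φ x
          * (∑ j, ginv x i j * pd j ((lapB g ginv)^[2 * m - 1 - s] v) x))
      + ∑ s ∈ Finset.range m, (∑ j, ginv x i j * pd j ((lapB g ginv)^[s] φ) x)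
          * (lapB g ginv)^[2 * m - 1 - s] v x) :
    ∀ x : Fin n → ℝ,
      (lapB g ginv)^[m] u x * (lapB g ginv)^[m] η x
          + (lapB g ginv)^[m] v x * (lapB g ginv)^[m] φ x
        = (lapB g ginv)^[2 * m] u x * η x + (lapB g ginv)^[2 * m] v x * φ x
          + ∑ i, covDVec g ginv w i i x := by
  intro x
  -- regularity of η and φ
  have hη' : ContDiff ℝ ((4 * m - 1 : ℕ)) η := by
    have heq : η = fun y => ∑ k, h y k * pd k v y := funext hη
    rw [heq]
    refine ContDiff.sum fun k _ => ((hh k).of_le (WithTop.coe_le_coe.mpr le_top)).mul (pd_contDiff_nat k ?_)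
    have he : ((4 * m - 1) + 1 : ℕ) = 4 * m := by omega
    rw [he]; exact hv
  have hφ' : ContDiff ℝ ((4 * m - 1 : ℕ)) φ := by
    have heq : φ = fun y => ∑ k, h y k * pd k u y := funext hφ
    rw [heq]
    refine ContDiff.sum fun k _ => ((hh k).of_le (WithTop.coe_le_coe.mpr le_top)).mul (pd_contDiff_nat k ?_)
    have he : ((4 * m - 1) + 1 : ℕ) = 4 * m := by omega
    rw [he]; exact hu
  -- C² regularity of the iterated Laplacians involved
  have hC2A : ∀ s ∈ Finset.range m, ContDiff ℝ (2 : ℕ) ((lapB g ginv)^[s] η) := by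
    intro s hs; rw [Finset.mem_range] at hs
    exact lapB_iter_contDiff hgs hginvs s (cd_mono (by omega) hη')
  have hC2P : ∀ s ∈ Finset.range m, ContDiff ℝ (2 : ℕ) ((lapB g ginv)^[s] φ) := by
    intro s hs; rw [Finset.mem_range] at hs
    exact lapB_iter_contDiff hgs hginvs s (cd_mono (by omega) hφ')
  have hC2U : ∀ s ∈ Finset.range m,
      ContDiff ℝ (2 : ℕ) ((lapB g ginv)^[2 * m - 1 - s] u) := by
    intro s hs; rw [Finset.mem_range] at hs
    exact lapB_iter_contDiff hgs hginvs _ (cd_mono (by omega) hu)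
  have hC2V : ∀ s ∈ Finset.range m,
      ContDiff ℝ (2 : ℕ) ((lapB g ginv)^[2 * m - 1 - s] v) := by
    intro s hs; rw [Finset.mem_range] at hs
    exact lapB_iter_contDiff hgs hginvs _ (cd_mono (by omega) hv)
  -- rewrite w as a sum over s of basic vector fields
  have hwx : ∀ (k : Fin n) (y : Fin n → ℝ), w y k = ∑ s ∈ Finset.range m,
      (VF g ginv ((lapB g ginv)^[s] η) ((lapB g ginv)^[2 * m - 1 - s] u) k y
        + VF g ginv ((lapB g ginv)^[s] φ) ((lapB g ginv)^[2 * m - 1 - s] v) k y) := by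
    intro k y
    rw [hw y k]
    simp only [VF]
    simp only [Finset.sum_add_distrib, Finset.sum_neg_distrib]
    ring
  have hdVu : ∀ s ∈ Finset.range m, ∀ k : Fin n, DifferentiableAt ℝ
      (fun y => VF g ginv ((lapB g ginv)^[s] η) ((lapB g ginv)^[2 * m - 1 - s] u) k y) x :=
    fun s hs k => VF_diffAt hginvs (hC2A s hs) (hC2U s hs) k x
  have hdVv : ∀ s ∈ Finset.range m, ∀ k : Fin n, DifferentiableAt ℝ
      (fun y => VF g ginv ((lapB g ginv)^[s] φ) ((lapB g ginv)^[2 * m - 1 - s] v) k y) x :=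
    fun s hs k => VF_diffAt hginvs (hC2P s hs) (hC2V s hs) k x
  -- exchange divergence and the sum over s
  have hcov : ∀ i : Fin n, covDVec g ginv w i i x = ∑ s ∈ Finset.range m,
      ((pd i (fun y => VF g ginv ((lapB g ginv)^[s] η) ((lapB g ginv)^[2 * m - 1 - s] u) i y) x
          + ∑ m', christoffel g ginv i i m' x
            * VF g ginv ((lapB g ginv)^[s] η) ((lapB g ginv)^[2 * m - 1 - s] u) m' x)
        + (pd i (fun y => VF g ginv ((lapB g ginv)^[s] φ) ((lapB g ginv)^[2 * m - 1 - s] v) i y) x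
          + ∑ m', christoffel g ginv i i m' x
            * VF g ginv ((lapB g ginv)^[s] φ) ((lapB g ginv)^[2 * m - 1 - s] v) m' x)) := by
    intro i
    have step1 : covDVec g ginv w i i x
        = pd i (fun y => ∑ s ∈ Finset.range m,
            (VF g ginv ((lapB g ginv)^[s] η) ((lapB g ginv)^[2 * m - 1 - s] u) i y
              + VF g ginv ((lapB g ginv)^[s] φ) ((lapB g ginv)^[2 * m - 1 - s] v) i y)) x
          + ∑ m', christoffel g ginv i i m' x * ∑ s ∈ Finset.range m,
            (VF g ginv ((lapB g ginv)^[s] η) ((lapB g ginv)^[2 * m - 1 - s] u) m' x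
              + VF g ginv ((lapB g ginv)^[s] φ) ((lapB g ginv)^[2 * m - 1 - s] v) m' x) := by
      simp only [covDVec]
      rw [show (fun y => w y i) = (fun y => ∑ s ∈ Finset.range m,
        (VF g ginv ((lapB g ginv)^[s] η) ((lapB g ginv)^[2 * m - 1 - s] u) i y
          + VF g ginv ((lapB g ginv)^[s] φ) ((lapB g ginv)^[2 * m - 1 - s] v) i y))
        from funext fun y => hwx i y]
      congr 1
      exact Finset.sum_congr rfl fun m' _ => by rw [hwx m' x]
    rw [step1,
      pd_sum (Finset.range m) i x (fun s hs => (hdVu s hs i).fun_add (hdVv s hs i))]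
    have step2 : ∑ m', christoffel g ginv i i m' x * ∑ s ∈ Finset.range m,
        (VF g ginv ((lapB g ginv)^[s] η) ((lapB g ginv)^[2 * m - 1 - s] u) m' x
          + VF g ginv ((lapB g ginv)^[s] φ) ((lapB g ginv)^[2 * m - 1 - s] v) m' x)
        = ∑ s ∈ Finset.range m, ∑ m', (christoffel g ginv i i m' x
            * VF g ginv ((lapB g ginv)^[s] η) ((lapB g ginv)^[2 * m - 1 - s] u) m' x
          + christoffel g ginv i i m' x
            * VF g ginv ((lapB g ginv)^[s] φ) ((lapB g ginv)^[2 * m - 1 - s] v) m' x) := by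
      simp only [Finset.mul_sum, mul_add]
      exact Finset.sum_comm
    rw [step2, ← Finset.sum_add_distrib]
    refine Finset.sum_congr rfl fun s hs => ?_
    rw [pd_add i x (hdVu s hs i) (hdVv s hs i), Finset.sum_add_distrib]
    ring
  -- sum the divergences and apply the pair identity
  have main : ∑ i, covDVec g ginv w i i x = ∑ s ∈ Finset.range m,
      ((lapB g ginv ((lapB g ginv)^[s] η) x * (lapB g ginv)^[2 * m - 1 - s] u x
          - (lapB g ginv)^[s] η x * lapB g ginv ((lapB g ginv)^[2 * m - 1 - s] u) x)
        + (lapB g ginv ((lapB g ginv)^[s] φ) x * (lapB g ginv)^[2 * m - 1 - s] v x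
          - (lapB g ginv)^[s] φ x * lapB g ginv ((lapB g ginv)^[2 * m - 1 - s] v) x)) := by
    simp only [hcov]
    rw [Finset.sum_comm]
    refine Finset.sum_congr rfl fun s hs => ?_
    rw [Finset.sum_add_distrib,
      div_pair' hgs hginvs hsymm hinv (hC2A s hs) (hC2U s hs) x,
      div_pair' hgs hginvs hsymm hinv (hC2P s hs) (hC2V s hs) x]
  -- telescoping
  have telU := Finset.sum_range_sub
    (fun t => (lapB g ginv)^[t] η x * (lapB g ginv)^[2 * m - t] u x) m
  have telV := Finset.sum_range_sub
    (fun t => (lapB g ginv)^[t] φ x * (lapB g ginv)^[2 * m - t] v x) m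
  rw [show 2 * m - m = m from by omega, Nat.sub_zero,
    Function.iterate_zero_apply] at telU telV
  have mainU : ∑ s ∈ Finset.range m,
      (lapB g ginv ((lapB g ginv)^[s] η) x * (lapB g ginv)^[2 * m - 1 - s] u x
        - (lapB g ginv)^[s] η x * lapB g ginv ((lapB g ginv)^[2 * m - 1 - s] u) x)
      = (lapB g ginv)^[m] η x * (lapB g ginv)^[m] u x - η x * (lapB g ginv)^[2 * m] u x := by
    rw [← telU]
    refine Finset.sum_congr rfl fun s hs => ?_
    rw [Finset.mem_range] at hs
    have e1 : lapB g ginv ((lapB g ginv)^[s] η) = (lapB g ginv)^[s + 1] η :=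
      (Function.iterate_succ_apply' (lapB g ginv) s η).symm
    have e2 : lapB g ginv ((lapB g ginv)^[2 * m - 1 - s] u) = (lapB g ginv)^[2 * m - s] u := by
      rw [show 2 * m - s = (2 * m - 1 - s) + 1 from by omega]
      exact (Function.iterate_succ_apply' (lapB g ginv) _ u).symm
    rw [e1, e2, show 2 * m - 1 - s = 2 * m - (s + 1) from by omega]
  have mainV : ∑ s ∈ Finset.range m,
      (lapB g ginv ((lapB g ginv)^[s] φ) x * (lapB g ginv)^[2 * m - 1 - s] v x
        - (lapB g ginv)^[s] φ x * lapB g ginv ((lapB g ginv)^[2 * m - 1 - s] v) x)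
      = (lapB g ginv)^[m] φ x * (lapB g ginv)^[m] v x - φ x * (lapB g ginv)^[2 * m] v x := by
    rw [← telV]
    refine Finset.sum_congr rfl fun s hs => ?_
    rw [Finset.mem_range] at hs
    have e1 : lapB g ginv ((lapB g ginv)^[s] φ) = (lapB g ginv)^[s + 1] φ :=
      (Function.iterate_succ_apply' (lapB g ginv) s φ).symm
    have e2 : lapB g ginv ((lapB g ginv)^[2 * m - 1 - s] v) = (lapB g ginv)^[2 * m - s] v := by
      rw [show 2 * m - s = (2 * m - 1 - s) + 1 from by omega]
      exact (Function.iterate_succ_apply' (lapB g ginv) _ v).symm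
    rw [e1, e2, show 2 * m - 1 - s = 2 * m - (s + 1) from by omega]
  rw [main, Finset.sum_add_distrib, mainU, mainV]
  ring

end Main
end
end

section
/- Let Ω ⊂ ℝⁿ be a bounded smooth domain and u ∈ C⁴(Ω̄). With h(x) = x (so μ = 2, R = 0): ∫_Ω Δ²u ⟨x, ∇u⟩ dx = ((4−n)/2) ∫_Ω (Δu)² dx + ∫_{∂Ω} [ (1/2)(Δu)² ⟨x,ν⟩ + ⟨x,∇u⟩ ∂(Δu)/∂ν − Δu (∂u/∂ν + Σ_{i,k} x^k u_{ki} ν_i) ] dS. -/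
open MeasureTheory
open scoped BigOperators

noncomputable section

/-- The Euclidean Laplacian. -/
def eLap {n : ℕ} (f : (Fin n → ℝ) → ℝ) : (Fin n → ℝ) → ℝ :=
  fun x => ∑ i, pd i (pd i f) x

namespace RellichAux
variable {n : ℕ}

lemma pd_contDiff {m k : WithTop ℕ∞} {f : (Fin n → ℝ) → ℝ} (i : Fin n)
    (hf : ContDiff ℝ m f) (h : k + 1 ≤ m) : ContDiff ℝ k (pd i f) :=
  (hf.fderiv_right h).clm_apply contDiff_const

lemma pd_add (i : Fin n) {f g : (Fin n → ℝ) → ℝ} {x} (hf : DifferentiableAt ℝ f x)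
    (hg : DifferentiableAt ℝ g x) :
    pd i (fun y => f y + g y) x = pd i f x + pd i g x := by
  simp [pd, fderiv_fun_add hf hg]

lemma pd_sub (i : Fin n) {f g : (Fin n → ℝ) → ℝ} {x} (hf : DifferentiableAt ℝ f x)
    (hg : DifferentiableAt ℝ g x) :
    pd i (fun y => f y - g y) x = pd i f x - pd i g x := by
  simp [pd, fderiv_fun_sub hf hg]

lemma pd_const_mul (i : Fin n) {f : (Fin n → ℝ) → ℝ} {x} (c : ℝ) (hf : DifferentiableAt ℝ f x) :
    pd i (fun y => c * f y) x = c * pd i f x := by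
  simp [pd, fderiv_const_mul hf c]

lemma pd_mul (i : Fin n) {f g : (Fin n → ℝ) → ℝ} {x} (hf : DifferentiableAt ℝ f x)
    (hg : DifferentiableAt ℝ g x) :
    pd i (fun y => f y * g y) x = pd i f x * g x + f x * pd i g x := by
  simp [pd, fderiv_fun_mul hf hg]; ring

lemma pd_sum (i : Fin n) {ι : Type*} (s : Finset ι) {f : ι → (Fin n → ℝ) → ℝ} {x}
    (hf : ∀ k ∈ s, DifferentiableAt ℝ (f k) x) :
    pd i (fun y => ∑ k ∈ s, f k y) x = ∑ k ∈ s, pd i (f k) x := by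
  simp [pd, fderiv_fun_sum hf]

lemma pd_coord (i j : Fin n) (x : Fin n → ℝ) :
    pd i (fun y => y j) x = if j = i then 1 else 0 := by
  have : (fun y : Fin n → ℝ => y j) = (ContinuousLinearMap.proj j : (Fin n → ℝ) →L[ℝ] ℝ) := rfl
  rw [pd, this, ContinuousLinearMap.fderiv]
  simp [Pi.single_apply]

lemma pd_swap {f : (Fin n → ℝ) → ℝ} (hf : ContDiff ℝ 2 f) (i k : Fin n) (x : Fin n → ℝ) :
    pd i (pd k f) x = pd k (pd i f) x := by
  have hd : DifferentiableAt ℝ (fderiv ℝ f) x :=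
    ((hf.fderiv_right (m := 1) le_rfl).differentiable one_ne_zero) x
  have key : ∀ a b : Fin n, pd a (pd b f) x
      = fderiv ℝ (fderiv ℝ f) x (Pi.single a 1) (Pi.single b 1) := by
    intro a b
    show fderiv ℝ (fun y => (fderiv ℝ f y) (Pi.single b 1)) x (Pi.single a 1) = _
    rw [fderiv_clm_apply hd (differentiableAt_const _)]
    simp
  rw [key, key]
  exact (hf.contDiffAt.isSymmSndFDerivAt (by norm_num)) _ _

lemma pd_dil (i : Fin n) (x : Fin n → ℝ) (g : Fin n → (Fin n → ℝ) → ℝ)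
    (hg : ∀ k, DifferentiableAt ℝ (g k) x) :
    pd i (fun y => ∑ k, y k * g k y) x = g i x + ∑ k, x k * pd i (g k) x := by
  have hcoord : ∀ k : Fin n, DifferentiableAt ℝ (fun y : Fin n → ℝ => y k) x := fun k =>
    (ContinuousLinearMap.proj k : (Fin n → ℝ) →L[ℝ] ℝ).differentiable.differentiableAt
  rw [pd_sum i Finset.univ (f := fun k y => y k * g k y) (fun k _ => (hcoord k).mul (hg k))]
  have : ∀ k : Fin n, pd i (fun y => y k * g k y) x
      = (if k = i then 1 else 0) * g k x + x k * pd i (g k) x := by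
    intro k
    rw [pd_mul i (hcoord k) (hg k), pd_coord]
  simp only [this, Finset.sum_add_distrib, ite_mul, one_mul, zero_mul,
    Finset.sum_ite_eq', Finset.mem_univ, if_true]

end RellichAux

open RellichAux

/-- the biharmonic Rellich identity in `ℝⁿ` with the dilation field `h(x) = x`. -/
theorem biharmonic_rellich_euclidean (n : ℕ) (Ω : Set (Fin n → ℝ))
    (hΩ : IsOpen Ω) (hΩb : Bornology.IsBounded Ω)
    (u : (Fin n → ℝ) → ℝ) (hu : ContDiff ℝ 4 u)
    (σ : Measure (Fin n → ℝ)) (ν : (Fin n → ℝ) → Fin n → ℝ)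
    (hdiv : ∀ X : (Fin n → ℝ) → Fin n → ℝ, (∀ i, ContDiff ℝ 1 fun x => X x i) →
      (∫ x in Ω, (∑ i, pd i (fun y => X y i) x))
        = ∫ x in frontier Ω, (∑ i, X x i * ν x i) ∂σ) :
    (∫ x in Ω, eLap (eLap u) x * (∑ i, x i * pd i u x))
      = ((4 - (n : ℝ)) / 2) * (∫ x in Ω, (eLap u x) ^ 2)
        + ∫ x in frontier Ω,
            ((1 / 2) * (eLap u x) ^ 2 * (∑ i, x i * ν x i)
              + (∑ i, x i * pd i u x) * (∑ i, pd i (eLap u) x * ν x i)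
              - eLap u x * ((∑ i, pd i u x * ν x i)
                  + ∑ i, ∑ k, x k * pd k (pd i u) x * ν x i)) ∂σ := by
  classical
  -- smoothness toolbox
  have hu3 : ∀ i : Fin n, ContDiff ℝ 3 (pd i u) := fun i => pd_contDiff i hu (by norm_num)
  have hu2 : ∀ i k : Fin n, ContDiff ℝ 2 (pd k (pd i u)) := fun i k =>
    pd_contDiff k (hu3 i) (by norm_num)
  have hu1 : ∀ i k l : Fin n, ContDiff ℝ 1 (pd l (pd k (pd i u))) := fun i k l =>
    pd_contDiff l (hu2 i k) (by norm_num)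
  have hL2 : ContDiff ℝ 2 (eLap u) := ContDiff.sum fun i _ => hu2 i i
  have hL1 : ∀ i : Fin n, ContDiff ℝ 1 (pd i (eLap u)) := fun i => pd_contDiff i hL2 (by norm_num)
  have hL0 : ∀ i k : Fin n, ContDiff ℝ 0 (pd k (pd i (eLap u))) := fun i k =>
    pd_contDiff k (hL1 i) (by norm_num)
  have hcoord : ∀ k : Fin n, ContDiff ℝ 1 (fun y : Fin n → ℝ => y k) := fun k =>
    (ContinuousLinearMap.proj k : (Fin n → ℝ) →L[ℝ] ℝ).contDiff
  have dcoord : ∀ (k : Fin n) (x), DifferentiableAt ℝ (fun y : Fin n → ℝ => y k) x := fun k x =>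
    ((hcoord k).differentiable one_ne_zero) x
  have dL : ∀ x, DifferentiableAt ℝ (eLap u) x := fun x =>
    (hL2.differentiable (by norm_num)) x
  have dLi : ∀ (i : Fin n) x, DifferentiableAt ℝ (pd i (eLap u)) x := fun i x =>
    ((hL1 i).differentiable one_ne_zero) x
  have dui : ∀ (i : Fin n) x, DifferentiableAt ℝ (pd i u) x := fun i x =>
    ((hu3 i).differentiable (by norm_num)) x
  have duik : ∀ (i k : Fin n) x, DifferentiableAt ℝ (pd k (pd i u)) x := fun i k x =>
    ((hu2 i k).differentiable (by norm_num)) x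
  have dv : ∀ x, DifferentiableAt ℝ (fun y => ∑ k, y k * pd k u y) x := fun x =>
    DifferentiableAt.fun_sum fun k _ => (dcoord k x).mul (dui k x)
  -- the vector field
  set X : (Fin n → ℝ) → Fin n → ℝ := fun x i =>
    1 / 2 * eLap u x ^ 2 * x i + (∑ k, x k * pd k u x) * pd i (eLap u) x
      - eLap u x * (pd i u x + ∑ k, x k * pd k (pd i u) x) with hXdef
  have hX1 : ∀ i, ContDiff ℝ 1 fun x => X x i := by
    intro i
    refine ContDiff.sub (ContDiff.add ?_ ?_) ?_
    · exact (contDiff_const.mul ((hL2.of_le (by norm_num)).pow 2)).mul (hcoord i)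
    · exact (ContDiff.sum fun k _ => (hcoord k).mul ((hu3 k).of_le (by norm_num))).mul (hL1 i)
    · exact (hL2.of_le (by norm_num)).mul
        (((hu3 i).of_le (by norm_num)).add (ContDiff.sum fun k _ => (hcoord k).mul ((hu2 i k).of_le (by norm_num))))
  -- pointwise divergence identity
  have key : ∀ x, (∑ i, pd i (fun y => X y i) x)
      = eLap (eLap u) x * (∑ k, x k * pd k u x) - ((4 - (n : ℝ)) / 2) * (eLap u x) ^ 2 := by
    intro x
    have hterm : ∀ i : Fin n, pd i (fun y => X y i) x =
        eLap u x * pd i (eLap u) x * x i + 1 / 2 * eLap u x ^ 2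
          + (∑ k, x k * pd k u x) * pd i (pd i (eLap u)) x
          - 2 * eLap u x * pd i (pd i u) x
          - eLap u x * (∑ k, x k * pd k (pd i (pd i u)) x) := by
      intro i
      have d1 : DifferentiableAt ℝ (fun y => 1 / 2 * eLap u y ^ 2 * y i) x :=
        ((differentiableAt_const _).mul ((dL x).pow 2)).mul (dcoord i x)
      have d2 : DifferentiableAt ℝ (fun y => (∑ k, y k * pd k u y) * pd i (eLap u) y) x :=
        (dv x).mul (dLi i x)
      have dw : DifferentiableAt ℝ (fun y => pd i u y + ∑ k, y k * pd k (pd i u) y) x :=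
        (dui i x).add (DifferentiableAt.fun_sum fun k _ => (dcoord k x).mul (duik i k x))
      have d3 : DifferentiableAt ℝ (fun y => eLap u y * (pd i u y + ∑ k, y k * pd k (pd i u) y)) x :=
        (dL x).mul dw
      have step : pd i (fun y => X y i) x
          = pd i (fun y => 1 / 2 * eLap u y ^ 2 * y i) x
            + pd i (fun y => (∑ k, y k * pd k u y) * pd i (eLap u) y) x
            - pd i (fun y => eLap u y * (pd i u y + ∑ k, y k * pd k (pd i u) y)) x := by
        show pd i (fun y => (1 / 2 * eLap u y ^ 2 * y i
            + (∑ k, y k * pd k u y) * pd i (eLap u) y)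
            - eLap u y * (pd i u y + ∑ k, y k * pd k (pd i u) y)) x = _
        rw [pd_sub i (d1.fun_add d2) d3, pd_add i d1 d2]
      have c1 : pd i (fun y => 1 / 2 * eLap u y ^ 2 * y i) x
          = (1 / 2 * (pd i (eLap u) x * eLap u x + eLap u x * pd i (eLap u) x)) * x i
            + 1 / 2 * eLap u x ^ 2 * (if (i : Fin n) = i then (1:ℝ) else 0) := by
        have hsq : pd i (fun y => eLap u y ^ 2) x
            = pd i (eLap u) x * eLap u x + eLap u x * pd i (eLap u) x := by
          have : (fun y => eLap u y ^ 2) = fun y => eLap u y * eLap u y := by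
            funext y; ring
          rw [this, pd_mul i (dL x) (dL x)]
        have := pd_mul i (f := fun y => 1 / 2 * eLap u y ^ 2) (g := fun y => y i)
          ((differentiableAt_const _).mul ((dL x).pow 2)) (dcoord i x)
        rw [this, pd_coord]
        have hc : pd i (fun y => 1 / 2 * eLap u y ^ 2) x = 1 / 2 * pd i (fun y => eLap u y ^ 2) x := by
          have := pd_const_mul i (c := (1:ℝ)/2) (f := fun y => eLap u y ^ 2) ((dL x).pow 2)
          exact this
        rw [hc, hsq]
      have c2 : pd i (fun y => (∑ k, y k * pd k u y) * pd i (eLap u) y) x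
          = (pd i u x + ∑ k, x k * pd i (pd k u) x) * pd i (eLap u) x
            + (∑ k, x k * pd k u x) * pd i (pd i (eLap u)) x := by
        rw [pd_mul i (dv x) (dLi i x), pd_dil i x (fun k => pd k u) (fun k => dui k x)]
      have c3 : pd i (fun y => eLap u y * (pd i u y + ∑ k, y k * pd k (pd i u) y)) x
          = pd i (eLap u) x * (pd i u x + ∑ k, x k * pd k (pd i u) x)
            + eLap u x * (pd i (pd i u) x
              + (pd i (pd i u) x + ∑ k, x k * pd i (pd k (pd i u)) x)) := by
        rw [pd_mul i (dL x) dw, pd_add i (dui i x)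
          (DifferentiableAt.fun_sum fun k _ => (dcoord k x).fun_mul (duik i k x)),
          pd_dil i x (fun k => pd k (pd i u)) (fun k => duik i k x)]
      have swap1 : ∀ k : Fin n, pd i (pd k u) x = pd k (pd i u) x := fun k =>
        pd_swap (hu.of_le (by norm_num)) i k x
      have swap2 : ∀ k : Fin n, pd i (pd k (pd i u)) x = pd k (pd i (pd i u)) x := fun k =>
        pd_swap ((hu3 i).of_le (by norm_num)) i k x
      rw [step, c1, c2, c3]
      simp only [swap1, swap2, eq_self_iff_true, if_true]
      ring
    rw [Finset.sum_congr rfl fun i _ => hterm i]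
    have hpdL : ∀ k : Fin n, pd k (eLap u) x = ∑ i, pd k (pd i (pd i u)) x := by
      intro k
      show pd k (fun y => ∑ i, pd i (pd i u) y) x = _
      exact pd_sum k Finset.univ fun i _ => duik i i x
    have hswap : (∑ i, eLap u x * (∑ k, x k * pd k (pd i (pd i u)) x))
        = ∑ i, eLap u x * pd i (eLap u) x * x i := by
      simp only [Finset.mul_sum, hpdL]
      rw [Finset.sum_comm]
      refine Finset.sum_congr rfl fun i _ => ?_
      rw [Finset.sum_mul]
      refine Finset.sum_congr rfl fun k _ => ?_
      ring
    simp only [Finset.sum_sub_distrib, Finset.sum_add_distrib, Finset.sum_const,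
      Finset.card_univ, Fintype.card_fin, nsmul_eq_mul, hswap]
    have h1 : (∑ i, (∑ k, x k * pd k u x) * pd i (pd i (eLap u)) x)
        = eLap (eLap u) x * (∑ k, x k * pd k u x) := by
      rw [← Finset.mul_sum]; rw [mul_comm]; rfl
    have h2 : (∑ i, 2 * eLap u x * pd i (pd i u) x) = 2 * eLap u x * eLap u x := by
      rw [← Finset.mul_sum]; rfl
    rw [h1, h2]
    ring
  -- integrability of the two interior integrands
  have hcLap2 : Continuous (eLap (eLap u)) := by
    show Continuous fun x => ∑ i, pd i (pd i (eLap u)) x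
    exact continuous_finset_sum _ fun i _ => (hL0 i i).continuous
  have hcv : Continuous fun x => ∑ k, x k * pd k u x :=
    continuous_finset_sum _ fun k _ => (continuous_apply k).mul (hu3 k).continuous
  have hint1 : IntegrableOn (fun x => eLap (eLap u) x * (∑ k, x k * pd k u x)) Ω :=
    (((hcLap2.mul hcv).continuousOn).integrableOn_compact hΩb.isCompact_closure).mono_set
      subset_closure
  have hint2 : IntegrableOn (fun x => (eLap u x) ^ 2) Ω :=
    (((hL2.continuous.pow 2).continuousOn).integrableOn_compact hΩb.isCompact_closure).mono_set
      subset_closure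
  have h1 := hdiv X hX1
  simp only [key] at h1
  rw [integral_sub hint1 (hint2.const_mul _), integral_const_mul] at h1
  -- rewrite the boundary integrand
  have hbd : ∀ x, (∑ i, X x i * ν x i)
      = (1 / 2) * (eLap u x) ^ 2 * (∑ i, x i * ν x i)
          + (∑ i, x i * pd i u x) * (∑ i, pd i (eLap u) x * ν x i)
          - eLap u x * ((∑ i, pd i u x * ν x i)
              + ∑ i, ∑ k, x k * pd k (pd i u) x * ν x i) := by
    intro x
    calc ∑ i, X x i * ν x i
        = ∑ i, (1 / 2 * eLap u x ^ 2 * (x i * ν x i)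
            + (∑ k, x k * pd k u x) * (pd i (eLap u) x * ν x i)
            - (eLap u x * (pd i u x * ν x i)
                + eLap u x * ∑ k, x k * pd k (pd i u) x * ν x i)) := by
          refine Finset.sum_congr rfl fun i _ => ?_
          simp only [hXdef]
          rw [← Finset.sum_mul]
          ring
      _ = _ := by
          simp only [Finset.sum_add_distrib, Finset.sum_sub_distrib, ← Finset.mul_sum]
          have hvv : (∑ i, x i * pd i u x) = ∑ k, x k * pd k u x := rfl
          rw [hvv]
          ring
  simp only [hbd] at h1
  linarith [h1]
end
end
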